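/- arXiv:2406.14902 — 10 statements merged into one kernel-verified Lean document; each statement's English description precedes it below -/
import Mathlib

section
/- Let Γ be a countable set, M a measurable space, and X = (X_k)_{k∈Γ} a family of independent and identically distributed random variables with values in M. Let E ⊆ M^Γ be a measurable event such that for every finite subset J ⊆ Γ there exists an injective map π : Γ → Γ which is a positional symmetry of E (i.e., for every a ∈ M^Γ, a ∈ E if and only if a∘π ∈ E) and satisfies π(J) ∩ J = ∅. Then P(X ∈ E) ∈ {0, 1}. -/
/-!
Approximate `E`, up to `ε` in law, by a cylinder `S` over a finite `J ⊆ Γ`, and take the symmetry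
`π` that moves `J` off itself. The events `{X ∈ S}` and `{X ∘ π ∈ S}` depend on disjoint sets of
coordinates, hence are independent; both approximate `{X ∈ E} = {X ∘ π ∈ E}`, because `X ∘ π` has
the same law as `X` (an injective reindexing of an i.i.d. family). So `P(X ∈ E) = P(X ∈ E)²`.
-/

open MeasureTheory ProbabilityTheory Set
open scoped symmDiff ENNReal

namespace MeasureTheory

variable {α : Type*} [MeasurableSpace α] {μ : Measure α}

lemma measure_inter_symmDiff_le (A B B' : Set α) :
    μ ((B ∩ B') ∆ A) ≤ μ (B ∆ A) + μ (B' ∆ A) := by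
  refine (measure_mono fun x => ?_).trans (measure_union_le _ _)
  simp only [mem_symmDiff, mem_inter_iff, mem_union]
  tauto

lemma measure_eq_zero_or_one_of_forall_approx_indep [IsProbabilityMeasure μ] {A : Set α}
    (hA : MeasurableSet A)
    (h : ∀ ε > 0, ∃ B B', MeasurableSet B ∧ MeasurableSet B' ∧ μ (B ∆ A) < ε ∧
      μ (B' ∆ A) < ε ∧ μ (B ∩ B') = μ B * μ B') :
    μ A = 0 ∨ μ A = 1 := by
  have close {B : Set α} (hB : MeasurableSet B) {δ : ℝ} (hBA : μ (B ∆ A) < ENNReal.ofReal δ) :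
      |μ.real B - μ.real A| < δ :=
    (abs_measureReal_sub_le_measureReal_symmDiff hB.nullMeasurableSet
      hA.nullMeasurableSet).trans_lt (ENNReal.toReal_lt_of_lt_ofReal hBA)
  have idem : μ.real A * μ.real A = μ.real A := by
    refine eq_of_forall_dist_le fun ε hε => ?_
    obtain ⟨B, B', hB, hB', hBA, hB'A, hind⟩ := h (ENNReal.ofReal (ε / 4)) (by positivity)
    have hb := abs_lt.1 (close hB hBA)
    have hb' := abs_lt.1 (close hB' hB'A)
    have hc := abs_lt.1 <| close (hB.inter hB') <| by
      calc μ ((B ∩ B') ∆ A) ≤ μ (B ∆ A) + μ (B' ∆ A) := measure_inter_symmDiff_le A B B'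
        _ < ENNReal.ofReal (ε / 4) + ENNReal.ofReal (ε / 4) := ENNReal.add_lt_add hBA hB'A
        _ = ENNReal.ofReal (ε / 4 + ε / 4) := (ENNReal.ofReal_add (by positivity)
          (by positivity)).symm
    rw [measureReal_def, hind, ENNReal.toReal_mul, ← measureReal_def, ← measureReal_def] at hc
    have hp₀ : 0 ≤ μ.real A := measureReal_nonneg
    have hp₁ : μ.real A ≤ 1 := measureReal_le_one
    have hb'₀ : 0 ≤ μ.real B' := measureReal_nonneg
    have hb'₁ : μ.real B' ≤ 1 := measureReal_le_one
    rw [Real.dist_eq, abs_le]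
    -- `p² - b b' = p (p - b') + b' (p - b)`, with `0 ≤ p, b' ≤ 1`
    constructor <;> nlinarith [mul_le_mul_of_nonneg_left hb'.1.le hp₀,
      mul_le_mul_of_nonneg_left hb'.2.le hp₀, mul_le_mul_of_nonneg_left hb.1.le hb'₀,
      mul_le_mul_of_nonneg_left hb.2.le hb'₀]
  rcases eq_or_ne (μ.real A) 0 with h₀ | h₀
  · exact .inl ((measureReal_eq_zero_iff (measure_ne_top μ A)).1 h₀)
  · exact .inr ((ENNReal.toReal_eq_one_iff _).1 ((mul_eq_left₀ h₀).1 idem))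

lemma exists_measurableCylinders_measure_symmDiff_lt {ι : Type*} {X : ι → Type*}
    [∀ i, MeasurableSpace (X i)] (μ : Measure (∀ i, X i)) [IsFiniteMeasure μ]
    {E : Set (∀ i, X i)} (hE : MeasurableSet E) {ε : ℝ≥0∞} (hε : 0 < ε) :
    ∃ S ∈ measurableCylinders X, μ (S ∆ E) < ε :=
  exists_measure_symmDiff_lt_of_generateFrom_isSetRing isSetRing_measurableCylinders
    ⟨{univ}, countable_singleton _, by simpa using univ_mem_measurableCylinders X, by simp⟩
    generateFrom_measurableCylinders.symm hE hε

end MeasureTheory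

namespace ProbabilityTheory.iIndepFun

variable {Ω M Γ : Type*} [MeasurableSpace Ω] [MeasurableSpace M] {P : Measure Ω}
  {X : Γ → Ω → M} {π : Γ → Γ}

lemma map_fun_precomp_eq [IsProbabilityMeasure P] (hindep : iIndepFun X P)
    (hmeas : ∀ k, Measurable (X k))
    (hident : ∀ k k', Measure.map (X k) P = Measure.map (X k') P) (hπ : π.Injective) :
    P.map (fun ω k => X (π k) ω) = P.map (fun ω k => X k ω) := by
  rw [(hindep.precomp hπ).map_fun_eq_infinitePi_map fun k => hmeas (π k),
    hindep.map_fun_eq_infinitePi_map hmeas]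
  congr 1
  funext k
  exact hident (π k) k

lemma indepFun_finset_precomp (hindep : iIndepFun X P) (hmeas : ∀ k, Measurable (X k))
    {I : Finset Γ} (hπI : ∀ i ∈ I, π i ∉ I) :
    IndepFun (fun ω (i : I) => X i ω) (fun ω (i : I) => X (π i) ω) P := by
  classical
  have hdisj : Disjoint I (I.image π) := by
    simp only [Finset.disjoint_right, Finset.mem_image]
    rintro _ ⟨i, hi, rfl⟩
    exact hπI i hi
  exact (hindep.indepFun_finset I (I.image π) hdisj hmeas).comp (φ := id)
    (ψ := fun v (i : I) => v ⟨π i, Finset.mem_image_of_mem π i.2⟩) measurable_id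
    (measurable_pi_lambda _ fun i => measurable_pi_apply _)

end ProbabilityTheory.iIndepFun

theorem iid_symmetric_zero_one_law_general
    {Ω M Γ : Type*} [MeasurableSpace Ω] [MeasurableSpace M]
    (Pr : Measure Ω) [IsProbabilityMeasure Pr]
    (X : Γ → Ω → M) (hmeas : ∀ k, Measurable (X k))
    (hindep : iIndepFun X Pr)
    (hident : ∀ k k', Measure.map (X k) Pr = Measure.map (X k') Pr)
    (E : Set (Γ → M)) (hE : MeasurableSet E)
    (hsym : ∀ J : Finset Γ, ∃ π : Γ → Γ, Function.Injective π ∧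
      (∀ a : Γ → M, a ∈ E ↔ (fun k => a (π k)) ∈ E) ∧
      (∀ j ∈ J, π j ∉ J)) :
    Pr {ω | (fun k => X k ω) ∈ E} = 0 ∨ Pr {ω | (fun k => X k ω) ∈ E} = 1 := by
  set φ : Ω → Γ → M := fun ω k => X k ω
  have hφ : Measurable φ := measurable_pi_lambda _ hmeas
  change Pr (φ ⁻¹' E) = 0 ∨ Pr (φ ⁻¹' E) = 1
  refine measure_eq_zero_or_one_of_forall_approx_indep (hφ hE) fun ε hε => ?_
  obtain ⟨S, hS, hSE⟩ := exists_measurableCylinders_measure_symmDiff_lt (Pr.map φ) hE hε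
  obtain ⟨I, T, hT, rfl⟩ := (mem_measurableCylinders S).1 hS
  obtain ⟨π, hπ, hπE, hπI⟩ := hsym I
  set ψ : Ω → Γ → M := fun ω k => X (π k) ω
  have hψ : Measurable ψ := measurable_pi_lambda _ fun k => hmeas (π k)
  have hEψ : φ ⁻¹' E = ψ ⁻¹' E := ext fun ω => hπE (φ ω)
  have hcyl : MeasurableSet (cylinder I T) := MeasurableSet.cylinder (α := fun _ : Γ => M) I hT
  refine ⟨φ ⁻¹' cylinder I T, ψ ⁻¹' cylinder I T, hφ hcyl, hψ hcyl, ?_, ?_, ?_⟩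
  · rwa [← preimage_symmDiff, ← Measure.map_apply hφ (hcyl.symmDiff hE)]
  · rwa [hEψ, ← preimage_symmDiff, ← Measure.map_apply hψ (hcyl.symmDiff hE),
      hindep.map_fun_precomp_eq hmeas hident hπ]
  · exact (hindep.indepFun_finset_precomp hmeas hπI).measure_inter_preimage_eq_mul T T hT hT

/-- **Zero-one law for i.i.d. random variables and symmetric events.**
If `E` is a measurable event in `M^Γ` such that for every finite `J ⊆ Γ` there is an
injective positional symmetry `π` of `E` with `π(J) ∩ J = ∅`, then `P(X ∈ E) ∈ {0,1}`
for every i.i.d. family `X = (X_k)_{k ∈ Γ}`. -/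
theorem iid_symmetric_zero_one_law
    {Ω M Γ : Type*} [MeasurableSpace Ω] [MeasurableSpace M] [Countable Γ]
    (Pr : Measure Ω) [IsProbabilityMeasure Pr]
    (X : Γ → Ω → M) (hmeas : ∀ k, Measurable (X k))
    (hindep : iIndepFun X Pr)
    (hident : ∀ k k', Measure.map (X k) Pr = Measure.map (X k') Pr)
    (E : Set (Γ → M)) (hE : MeasurableSet E)
    (hsym : ∀ J : Finset Γ, ∃ π : Γ → Γ, Function.Injective π ∧
      (∀ a : Γ → M, a ∈ E ↔ (fun k => a (π k)) ∈ E) ∧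
      (∀ j ∈ J, π j ∉ J)) :
    Pr {ω | (fun k => X k ω) ∈ E} = 0 ∨ Pr {ω | (fun k => X k ω) ∈ E} = 1 :=
  iid_symmetric_zero_one_law_general Pr X hmeas hindep hident E hE hsym
end

section
/- Let Γ be a countable set, M a measurable space, and X = (X_k)_{k∈Γ} a family of independent random variables with values in M, where X_k has distribution p_k. Let E ⊆ M^Γ be a measurable event such that for every finite subset J ⊆ Γ and every δ > 0, there exists an injective map π : Γ → Γ which is a positional symmetry of E, satisfies π(J) ∩ J = ∅, and satisfies ∑_{k∈Γ} ‖p_{π(k)} − p_k‖_TV < δ. Then P(X ∈ E) ∈ {0, 1}. -/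
/-!
Let `μ` be the product of the `p k`. Approximate `E` by a cylinder `C` over a finite set `J`
and pick a symmetry `π` moving `J` off itself. Since `E` is invariant under `a ↦ a ∘ π`, it is
also approximated by the shifted cylinder `C' = {a | a ∘ π ∈ C}`, because the law of `a ∘ π`,
the product of the `p (π k)`, is within `∑ ‖p (π k) - p k‖_TV` of `μ` in total variation. The events `C` and `C'` depend
on the disjoint coordinate sets `J` and `π J`, hence are independent, so
`μ E ≈ μ (C ∩ C') = μ C * μ C' ≈ (μ E) ^ 2`, and `μ E = (μ E) ^ 2`.
-/

open MeasureTheory ProbabilityTheory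

/-- The total variation distance `sup_A |μ(A) - ν(A)|` between two measures,
the supremum ranging over measurable sets. -/
noncomputable def tvDist {X : Type*} [MeasurableSpace X] (μ ν : Measure X) : ℝ :=
  ⨆ A : {A : Set X // MeasurableSet A}, |(μ A).toReal - (ν A).toReal|

open Set
open scoped ENNReal symmDiff

/-- Half of the total variation bound `‖μ - ν‖_TV ≤ c`. -/
def ExcessLE {α : Type*} [MeasurableSpace α] (μ ν : Measure α) (c : ℝ≥0∞) : Prop :=
  ∀ S, MeasurableSet S → μ S ≤ ν S + c

section

variable {α β : Type*} [MeasurableSpace α] [MeasurableSpace β]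

lemma excessLE_ofReal_tvDist (μ ν : Measure α) [IsProbabilityMeasure μ]
    [IsProbabilityMeasure ν] : ExcessLE μ ν (ENNReal.ofReal (tvDist μ ν)) := by
  intro S hS
  have hbdd : BddAbove (range fun A : {A : Set α // MeasurableSet A} =>
      |(μ A).toReal - (ν A).toReal|) := by
    refine ⟨1, ?_⟩
    rintro _ ⟨A, rfl⟩
    exact abs_sub_le_of_nonneg_of_le measureReal_nonneg measureReal_le_one
      measureReal_nonneg measureReal_le_one
  have hsup : |(μ S).toReal - (ν S).toReal| ≤ tvDist μ ν :=
    le_ciSup hbdd (⟨S, hS⟩ : {A : Set α // MeasurableSet A})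
  have hreal : (μ S).toReal ≤ (ν S).toReal + tvDist μ ν := by
    linarith [le_abs_self ((μ S).toReal - (ν S).toReal)]
  calc μ S = ENNReal.ofReal (μ S).toReal := (ENNReal.ofReal_toReal (measure_ne_top _ _)).symm
    _ ≤ ENNReal.ofReal ((ν S).toReal + tvDist μ ν) := ENNReal.ofReal_le_ofReal hreal
    _ ≤ ν S + ENNReal.ofReal (tvDist μ ν) := by
      grw [ENNReal.ofReal_add_le, ENNReal.ofReal_toReal (measure_ne_top _ _)]

namespace ExcessLE

variable {μ ν ρ : Measure α} {c c' : ℝ≥0∞}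

lemma trans (h : ExcessLE μ ρ c) (h' : ExcessLE ρ ν c') : ExcessLE μ ν (c + c') :=
  fun S hS => (h S hS).trans <| by grw [h' S hS]; rw [add_assoc, add_comm c']

lemma map (h : ExcessLE μ ν c) {f : α → β} (hf : Measurable f) :
    ExcessLE (μ.map f) (ν.map f) c := fun S hS => by
  simpa only [Measure.map_apply hf hS] using h _ (hf hS)

lemma prod_right [SFinite μ] [SFinite ν] (h : ExcessLE μ ν c) (ρ : Measure β)
    [IsProbabilityMeasure ρ] : ExcessLE (μ.prod ρ) (ν.prod ρ) c := fun S hS =>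
  calc (μ.prod ρ) S = ∫⁻ y, μ ((fun x => (x, y)) ⁻¹' S) ∂ρ := Measure.prod_apply_symm hS
    _ ≤ ∫⁻ y, ν ((fun x => (x, y)) ⁻¹' S) + c ∂ρ :=
      lintegral_mono fun y => h _ (measurable_prodMk_right hS)
    _ = (ν.prod ρ) S + c := by
      rw [lintegral_add_right _ measurable_const, lintegral_const, measure_univ, mul_one,
        Measure.prod_apply_symm hS]

lemma prod_left {μ ν : Measure β} [SFinite μ] [SFinite ν] (h : ExcessLE μ ν c) (ρ : Measure α)
    [IsProbabilityMeasure ρ] : ExcessLE (ρ.prod μ) (ρ.prod ν) c := fun S hS =>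
  calc (ρ.prod μ) S = ∫⁻ x, μ (Prod.mk x ⁻¹' S) ∂ρ := Measure.prod_apply hS
    _ ≤ ∫⁻ x, ν (Prod.mk x ⁻¹' S) + c ∂ρ :=
      lintegral_mono fun x => h _ (measurable_prodMk_left hS)
    _ = (ρ.prod ν) S + c := by
      rw [lintegral_add_right _ measurable_const, lintegral_const, measure_univ, mul_one,
        Measure.prod_apply hS]

lemma prod {μ₁ ν₁ : Measure α} {μ₂ ν₂ : Measure β} [SFinite μ₁] [IsProbabilityMeasure ν₁]
    [IsProbabilityMeasure μ₂] [SFinite ν₂] (h₁ : ExcessLE μ₁ ν₁ c) (h₂ : ExcessLE μ₂ ν₂ c') :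
    ExcessLE (μ₁.prod μ₂) (ν₁.prod ν₂) (c + c') :=
  (h₁.prod_right μ₂).trans (h₂.prod_left ν₁)

lemma of_generateFrom [IsFiniteMeasure μ] [IsFiniteMeasure ν] {𝒜 : Set (Set α)}
    (h𝒜 : IsSetAlgebra 𝒜) (hgen : ‹MeasurableSpace α› = MeasurableSpace.generateFrom 𝒜)
    (h : ∀ t ∈ 𝒜, μ t ≤ ν t + c) : ExcessLE μ ν c := by
  intro S hS
  refine ENNReal.le_of_forall_pos_le_add fun η hη _ => ?_
  obtain ⟨t, ht, hSt⟩ := (Measure.MeasureDense.of_generateFrom_isSetAlgebra_finite (μ + ν) h𝒜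
    hgen).approx S hS (measure_ne_top _ _) η hη
  have hle : ∀ {ρ : Measure α} {a b : Set α}, ρ a ≤ ρ b + ρ (a ∆ b) := fun {ρ a b} =>
    tsub_le_iff_left.1 le_measure_symmDiff
  calc μ S ≤ μ t + μ (S ∆ t) := hle
    _ ≤ ν S + ν (t ∆ S) + c + μ (S ∆ t) := by gcongr; exact (h t ht).trans (by gcongr; exact hle)
    _ = ν S + c + (μ + ν) (S ∆ t) := by rw [symmDiff_comm, Measure.add_apply]; ring
    _ ≤ ν S + c + η := by gcongr; simpa using hSt.le

variable {ι : Type*} {X : ι → Type*} [∀ i, MeasurableSpace (X i)]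
  {μ ν : (i : ι) → Measure (X i)} [∀ i, IsProbabilityMeasure (μ i)]
  [∀ i, IsProbabilityMeasure (ν i)] {c : ι → ℝ≥0∞}

lemma pi (h : ∀ i, ExcessLE (μ i) (ν i) (c i)) (s : Finset ι) :
    ExcessLE (Measure.pi fun i : s => μ i) (Measure.pi fun i : s => ν i) (∑ i ∈ s, c i) := by
  classical
  induction s using Finset.induction_on with
  | empty =>
    intro S _
    rw [Measure.pi_of_empty, Measure.pi_of_empty]
    exact le_self_add
  | insert a s ha ih =>
    have hd : Disjoint {a} s := Finset.disjoint_singleton_left.2 ha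
    have hsingle : ExcessLE (Measure.pi fun i : ({a} : Finset ι) => μ i)
        (Measure.pi fun i : ({a} : Finset ι) => ν i) (c a) := by
      rw [← (measurePreserving_piUnique fun i : ({a} : Finset ι) => μ i).symm.map_eq,
        ← (measurePreserving_piUnique fun i : ({a} : Finset ι) => ν i).symm.map_eq]
      exact (h a).map (MeasurableEquiv.measurable _)
    rw [Finset.insert_eq, Finset.sum_union hd, Finset.sum_singleton,
      ← (measurePreserving_piFinsetUnion hd μ).map_eq,
      ← (measurePreserving_piFinsetUnion hd ν).map_eq]
    exact (hsingle.prod ih).map (MeasurableEquiv.measurable _)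

lemma infinitePi (h : ∀ i, ExcessLE (μ i) (ν i) (c i)) :
    ExcessLE (Measure.infinitePi μ) (Measure.infinitePi ν) (∑' i, c i) :=
  of_generateFrom isSetAlgebra_measurableCylinders generateFrom_measurableCylinders.symm
    fun t ht => by
      obtain ⟨s, T, hT, rfl⟩ := (mem_measurableCylinders t).1 ht
      rw [Measure.infinitePi_cylinder μ hT, Measure.infinitePi_cylinder ν hT]
      exact (pi h s T hT).trans (by gcongr; exact ENNReal.sum_le_tsum s)

end ExcessLE

end

lemma abs_measureReal_sub_sq_le {Ω : Type*} [MeasurableSpace Ω] (P : Measure Ω)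
    [IsProbabilityMeasure P] {A B B' : Set Ω} (hA : MeasurableSet A) (hB : MeasurableSet B)
    (hB' : MeasurableSet B') (hind : P (B ∩ B') = P B * P B') :
    |P.real A - P.real A ^ 2| ≤ 2 * (P.real (A ∆ B) + P.real (A ∆ B')) := by
  set a := P.real A
  set b := P.real B
  set b' := P.real B'
  have hinter : P.real (B ∩ B') = b * b' := by
    simp only [measureReal_def, hind, ENNReal.toReal_mul, b, b']
  have hsub : A ∆ (B ∩ B') ⊆ A ∆ B ∪ A ∆ B' := by
    intro x
    simp only [mem_symmDiff, mem_inter_iff, mem_union]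
    tauto
  have h₀ : |a - b * b'| ≤ P.real (A ∆ B) + P.real (A ∆ B') := by
    rw [← hinter]
    exact (abs_measureReal_sub_le_measureReal_symmDiff hA.nullMeasurableSet
      (hB.inter hB').nullMeasurableSet).trans ((measureReal_mono hsub).trans
        (measureReal_union_le _ _))
  have h₁ : |b - a| ≤ P.real (A ∆ B) := by
    rw [abs_sub_comm]
    exact abs_measureReal_sub_le_measureReal_symmDiff hA.nullMeasurableSet hB.nullMeasurableSet
  have h₂ : |b' - a| ≤ P.real (A ∆ B') := by
    rw [abs_sub_comm]
    exact abs_measureReal_sub_le_measureReal_symmDiff hA.nullMeasurableSet hB'.nullMeasurableSet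
  have hb : |b| ≤ 1 := by rw [abs_of_nonneg measureReal_nonneg]; exact measureReal_le_one
  have ha : |a| ≤ 1 := by rw [abs_of_nonneg measureReal_nonneg]; exact measureReal_le_one
  calc |a - a ^ 2| = |(a - b * b') + b * (b' - a) + a * (b - a)| := by ring_nf
    _ ≤ |a - b * b'| + |b| * |b' - a| + |a| * |b - a| := by
      grw [abs_add_le, abs_add_le, abs_mul, abs_mul]
    _ ≤ (P.real (A ∆ B) + P.real (A ∆ B')) + 1 * P.real (A ∆ B') + 1 * P.real (A ∆ B) := by
      gcongr
    _ = 2 * (P.real (A ∆ B) + P.real (A ∆ B')) := by ring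

section Product

variable {Γ M : Type*} [MeasurableSpace M] (p : Γ → Measure M) [∀ k, IsProbabilityMeasure (p k)]

lemma infinitePi_cylinder_inter_preimage_comp_eq_mul {s : Finset Γ} {π : Γ → Γ}
    (hπ : ∀ j ∈ s, π j ∉ s) {T T' : Set (s → M)} (hT : MeasurableSet T)
    (hT' : MeasurableSet T') :
    Measure.infinitePi p (cylinder s T ∩ (fun a k => a (π k)) ⁻¹' cylinder s T') =
      Measure.infinitePi p (cylinder s T) *
        Measure.infinitePi p ((fun a k => a (π k)) ⁻¹' cylinder s T') := by
  classical
  have hdisj : Disjoint s (s.image π) := Finset.disjoint_left.2 fun j hj hjπ => by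
    obtain ⟨i, hi, rfl⟩ := Finset.mem_image.1 hjπ
    exact hπ i hi hj
  have hind := (iIndepFun_infinitePi (P := p) (X := fun _ x => x) fun _ => measurable_id)
    |>.indepFun_finset s (s.image π) hdisj fun _ => measurable_pi_apply _
  let φ : (s.image π → M) → (s → M) := fun x i => x ⟨π i, Finset.mem_image_of_mem π i.2⟩
  exact (hind.comp measurable_id (by fun_prop : Measurable φ)).measure_inter_preimage_eq_mul
    T T' hT hT'

variable {p} {E : Set (Γ → M)}

lemma abs_infinitePi_real_sub_sq_le (hE : MeasurableSet E) {s : Finset Γ} {T : Set (s → M)}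
    (hT : MeasurableSet T) {ε : ℝ} (hε : 0 ≤ ε)
    (hET : Measure.infinitePi p (E ∆ cylinder s T) ≤ ENNReal.ofReal ε) {π : Γ → Γ}
    (hπinj : Function.Injective π) (hπE : ∀ a : Γ → M, a ∈ E ↔ (fun k => a (π k)) ∈ E)
    (hπs : ∀ j ∈ s, π j ∉ s)
    (hπp : ∑' k, ENNReal.ofReal (tvDist (p (π k)) (p k)) ≤ ENNReal.ofReal ε) :
    |(Measure.infinitePi p).real E - (Measure.infinitePi p).real E ^ 2| ≤ 6 * ε := by
  set μ := Measure.infinitePi p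
  set σ : (Γ → M) → (Γ → M) := fun a k => a (π k)
  have hσ : Measurable σ := by fun_prop
  have hC : MeasurableSet (cylinder s T) := MeasurableSet.cylinder (α := fun _ => M) s hT
  have hσE : σ ⁻¹' E = E := ext fun a => (hπE a).symm
  have hshift : μ (E ∆ (σ ⁻¹' cylinder s T)) ≤ ENNReal.ofReal (2 * ε) :=
    calc μ (E ∆ (σ ⁻¹' cylinder s T)) = μ.map σ (E ∆ cylinder s T) := by
          rw [Measure.map_apply hσ (hE.symmDiff hC), preimage_symmDiff, hσE]
      _ ≤ μ (E ∆ cylinder s T) + ∑' k, ENNReal.ofReal (tvDist (p (π k)) (p k)) := by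
          rw [Measure.map_infinitePi_infinitePi_of_inj hπinj]
          exact ExcessLE.infinitePi (fun k => excessLE_ofReal_tvDist (p (π k)) (p k)) _
            (hE.symmDiff hC)
      _ ≤ ENNReal.ofReal (2 * ε) := by
          grw [hET, hπp, ← ENNReal.ofReal_add hε hε, two_mul]
  calc |μ.real E - μ.real E ^ 2|
      ≤ 2 * (μ.real (E ∆ cylinder s T) + μ.real (E ∆ (σ ⁻¹' cylinder s T))) :=
        abs_measureReal_sub_sq_le μ hE hC (hσ hC)
          (infinitePi_cylinder_inter_preimage_comp_eq_mul p hπs hT hT)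
    _ ≤ 2 * (ε + 2 * ε) := by
        gcongr
        · exact ENNReal.toReal_le_of_le_ofReal hε hET
        · exact ENNReal.toReal_le_of_le_ofReal (by positivity) hshift
    _ = 6 * ε := by ring

lemma eq_zero_or_one_of_forall_abs_sub_sq_le {a : ℝ} (h : ∀ ε > 0, |a - a ^ 2| ≤ ε) :
    a = 0 ∨ a = 1 := by
  have h0 : |a - a ^ 2| ≤ 0 := le_of_forall_pos_le_add fun ε hε => by simpa using h ε hε
  have : a * (1 - a) = 0 := by rw [abs_nonpos_iff] at h0; linear_combination h0
  rcases mul_eq_zero.1 this with ha | ha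
  · exact .inl ha
  · exact .inr (by linarith)

theorem infinitePi_eq_zero_or_one_of_symmetric (hE : MeasurableSet E)
    (hsym : ∀ (J : Finset Γ) (δ : ℝ), 0 < δ → ∃ π : Γ → Γ, Function.Injective π ∧
      (∀ a : Γ → M, a ∈ E ↔ (fun k => a (π k)) ∈ E) ∧
      (∀ j ∈ J, π j ∉ J) ∧
      (∑' k : Γ, ENNReal.ofReal (tvDist (p (π k)) (p k))) < ENNReal.ofReal δ) :
    Measure.infinitePi p E = 0 ∨ Measure.infinitePi p E = 1 := by
  set μ := Measure.infinitePi p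
  have hdense : μ.MeasureDense (measurableCylinders fun _ : Γ => M) :=
    .of_generateFrom_isSetAlgebra_finite μ isSetAlgebra_measurableCylinders
      generateFrom_measurableCylinders.symm
  have hsmall : ∀ ε > 0, |μ.real E - μ.real E ^ 2| ≤ ε := by
    intro ε hε
    obtain ⟨C, hC, hEC⟩ := hdense.approx E hE (measure_ne_top _ _) (ε / 6) (by positivity)
    obtain ⟨s, T, hT, rfl⟩ := (mem_measurableCylinders C).1 hC
    obtain ⟨π, hπinj, hπE, hπs, hπp⟩ := hsym s (ε / 6) (by positivity)
    linarith [abs_infinitePi_real_sub_sq_le hE hT (by positivity) hEC.le hπinj hπE hπs hπp.le]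
  rcases eq_zero_or_one_of_forall_abs_sub_sq_le hsmall with h | h
  · exact .inl ((measureReal_eq_zero_iff).1 h)
  · exact .inr ((ENNReal.toReal_eq_one_iff _).1 h)

end Product

theorem independent_symmetric_zero_one_law_general
    {Ω M Γ : Type*} [MeasurableSpace Ω] [MeasurableSpace M]
    (Pr : Measure Ω) [IsProbabilityMeasure Pr]
    (X : Γ → Ω → M) (hmeas : ∀ k, Measurable (X k))
    (hindep : iIndepFun X Pr)
    (p : Γ → Measure M) [∀ k, IsProbabilityMeasure (p k)]
    (hdist : ∀ k, Measure.map (X k) Pr = p k)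
    (E : Set (Γ → M)) (hE : MeasurableSet E)
    (hsym : ∀ (J : Finset Γ) (δ : ℝ), 0 < δ → ∃ π : Γ → Γ, Function.Injective π ∧
      (∀ a : Γ → M, a ∈ E ↔ (fun k => a (π k)) ∈ E) ∧
      (∀ j ∈ J, π j ∉ J) ∧
      (∑' k : Γ, ENNReal.ofReal (tvDist (p (π k)) (p k))) < ENNReal.ofReal δ) :
    Pr {ω | (fun k => X k ω) ∈ E} = 0 ∨ Pr {ω | (fun k => X k ω) ∈ E} = 1 := by
  have hlaw : Pr.map (fun ω k => X k ω) = Measure.infinitePi p := by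
    rw [hindep.map_fun_eq_infinitePi_map hmeas]
    simp_rw [hdist]
  have hE' : Pr {ω | (fun k => X k ω) ∈ E} = Measure.infinitePi p E := by
    rw [← hlaw, Measure.map_apply (measurable_pi_lambda _ hmeas) hE]
    rfl
  rw [hE']
  exact infinitePi_eq_zero_or_one_of_symmetric hE hsym

/-- **Zero-one law for independent but not identically distributed random variables.**
If for every finite `J ⊆ Γ` and every `δ > 0` the event `E` has an injective positional
symmetry `π` with `π(J) ∩ J = ∅` and `∑_k ‖p_{π(k)} - p_k‖_TV < δ`, then
`P(X ∈ E) ∈ {0,1}`. -/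
theorem independent_symmetric_zero_one_law
    {Ω M Γ : Type*} [MeasurableSpace Ω] [MeasurableSpace M] [Countable Γ]
    (Pr : Measure Ω) [IsProbabilityMeasure Pr]
    (X : Γ → Ω → M) (hmeas : ∀ k, Measurable (X k))
    (hindep : iIndepFun X Pr)
    (p : Γ → Measure M) [∀ k, IsProbabilityMeasure (p k)]
    (hdist : ∀ k, Measure.map (X k) Pr = p k)
    (E : Set (Γ → M)) (hE : MeasurableSet E)
    (hsym : ∀ (J : Finset Γ) (δ : ℝ), 0 < δ → ∃ π : Γ → Γ, Function.Injective π ∧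
      (∀ a : Γ → M, a ∈ E ↔ (fun k => a (π k)) ∈ E) ∧
      (∀ j ∈ J, π j ∉ J) ∧
      (∑' k : Γ, ENNReal.ofReal (tvDist (p (π k)) (p k))) < ENNReal.ofReal δ) :
    Pr {ω | (fun k => X k ω) ∈ E} = 0 ∨ Pr {ω | (fun k => X k ω) ∈ E} = 1 :=
  independent_symmetric_zero_one_law_general Pr X hmeas hindep p hdist E hE hsym
end

section
/- Let Γ be a countable set, M a measurable space, and X = (X_k)_{k∈Γ} a family of random variables with values in M that has the Kolmogorov mixing property. Let E ⊆ M^Γ be a measurable event such that for every finite subset J ⊆ Γ there exists a map π : Γ → Γ which is a positional symmetry of E, satisfies π(J) ∩ J = ∅, and is such that the families X = (X_k)_{k∈Γ} and X^π = (X_{π(k)})_{k∈Γ} have the same joint distribution. Then P(X ∈ E) ∈ {0, 1}. -/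
/-!
Let `μ` be the law of `X` on `M^Γ` and `p = μ(E)`. Approximate `E` within `ε` by a cylinder
event `V` depending on the coordinates in a finite `J`, let `K` be the finite set that mixing
provides for `V`, and take a symmetry `π` of `E` moving `J ∪ K` off itself. Then
`W = {a | a^π ∈ V}` depends only on coordinates outside `K`, and since `π` preserves both `μ`
and `E`, `W` approximates `E` as well as `V` does. Mixing gives `μ(V ∩ W) ≈ μ(V) μ(W)`, hence
`p ≈ p²` up to `O(ε)`, so `p ∈ {0, 1}`.
-/

open MeasureTheory ProbabilityTheory

/-- An event `V ⊆ M^Γ` is measurably determined by the coordinates in `S ⊆ Γ` if it is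
measurable with respect to the σ-algebra generated by those coordinates. -/
def DeterminedBy {Γ M : Type*} [MeasurableSpace M] (V : Set (Γ → M)) (S : Set Γ) : Prop :=
  MeasurableSet[MeasurableSpace.comap (fun (a : Γ → M) => S.restrict a) MeasurableSpace.pi] V

/-- A family `X = (X_k)_{k ∈ Γ}` of `M`-valued random variables has the
**Kolmogorov mixing property** (short-range correlations) if for every cylinder event `V`
and every `ε > 0` there is a finite `K ⊆ Γ` such that
`|P(X ∈ V ∩ W) - P(X ∈ V)·P(X ∈ W)| < ε` for every event `W` measurably determined by
the coordinates outside `K`. -/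
def KolmogorovMixing {Ω Γ M : Type*} [MeasurableSpace Ω] [MeasurableSpace M]
    (Pr : Measure Ω) (X : Γ → Ω → M) : Prop :=
  ∀ (J : Finset Γ) (V : Set (Γ → M)), DeterminedBy V (↑J : Set Γ) →
    ∀ ε : ℝ, 0 < ε → ∃ K : Finset Γ,
      ∀ W : Set (Γ → M), DeterminedBy W ((↑K : Set Γ)ᶜ) →
        |(Pr {ω | (fun k => X k ω) ∈ V ∩ W}).toReal -
          (Pr {ω | (fun k => X k ω) ∈ V}).toReal * (Pr {ω | (fun k => X k ω) ∈ W}).toReal| < ε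

open Set
open scoped symmDiff

namespace DeterminedBy

variable {Γ M : Type*} [MeasurableSpace M] {V : Set (Γ → M)} {S S' : Set Γ}

lemma mono (hSS : S ⊆ S') (h : DeterminedBy V S) : DeterminedBy V S' := by
  obtain ⟨s, hs, rfl⟩ := h
  exact ⟨(fun (b : S' → M) (i : S) => b ⟨i, hSS i.2⟩) ⁻¹' s,
    (measurable_pi_lambda _ fun _ => measurable_pi_apply _) hs, rfl⟩

lemma preimage_comp (π : Γ → Γ) (h : DeterminedBy V S) :
    DeterminedBy ((fun (a : Γ → M) (k : Γ) => a (π k)) ⁻¹' V) (π '' S) := by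
  obtain ⟨s, hs, rfl⟩ := h
  exact ⟨(fun (b : π '' S → M) (i : S) => b ⟨π i, i, i.2, rfl⟩) ⁻¹' s,
    (measurable_pi_lambda _ fun _ => measurable_pi_apply _) hs, rfl⟩

protected lemma measurableSet (h : DeterminedBy V S) : MeasurableSet V :=
  (measurable_pi_lambda _ fun _ => measurable_pi_apply _).comap_le _ h

end DeterminedBy

section Cylinders

variable {Γ M : Type*} [MeasurableSpace M]

lemma exists_finset_determinedBy_of_mem_measurableCylinders {V : Set (Γ → M)}
    (hV : V ∈ measurableCylinders (fun _ : Γ => M)) :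
    ∃ J : Finset Γ, DeterminedBy V (↑J : Set Γ) := by
  obtain ⟨J, S, hS, rfl⟩ := (mem_measurableCylinders V).1 hV
  exact ⟨J, S, hS, rfl⟩

lemma exists_mem_measurableCylinders_measureReal_symmDiff_lt (μ : Measure (Γ → M))
    [IsFiniteMeasure μ] {E : Set (Γ → M)} (hE : MeasurableSet E) {ε : ℝ} (hε : 0 < ε) :
    ∃ V ∈ measurableCylinders (fun _ : Γ => M), μ.real (E ∆ V) < ε := by
  obtain ⟨V, hV, hEV⟩ := (Measure.MeasureDense.of_generateFrom_isSetAlgebra_finite μ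
    isSetAlgebra_measurableCylinders generateFrom_measurableCylinders.symm).approx
      E hE (measure_ne_top μ E) ε hε
  exact ⟨V, hV, ENNReal.toReal_lt_of_lt_ofReal hEV⟩

end Cylinders

section ZeroOne

variable {α : Type*} [MeasurableSpace α] (μ : Measure α) [IsProbabilityMeasure μ]

lemma abs_measureReal_sub_sq_le_s4 {E V W : Set α}
    (hE : MeasurableSet E) (hV : MeasurableSet V) (hW : MeasurableSet W) :
    |μ.real E - μ.real E ^ 2| ≤ |μ.real (V ∩ W) - μ.real V * μ.real W| +
      2 * (μ.real (E ∆ V) + μ.real (E ∆ W)) := by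
  set p := μ.real E
  have hVW : |μ.real (V ∩ W) - p| ≤ μ.real (E ∆ V) + μ.real (E ∆ W) := by
    refine (abs_measureReal_sub_le_measureReal_symmDiff (hV.inter hW).nullMeasurableSet
      hE.nullMeasurableSet).trans ((measureReal_mono ?_).trans (measureReal_union_le _ _))
    intro x
    simp only [mem_symmDiff, mem_inter_iff, mem_union]
    tauto
  have hVE : |μ.real V - p| ≤ μ.real (E ∆ V) := by
    rw [symmDiff_comm]
    exact abs_measureReal_sub_le_measureReal_symmDiff hV.nullMeasurableSet hE.nullMeasurableSet
  have hWE : |μ.real W - p| ≤ μ.real (E ∆ W) := by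
    rw [symmDiff_comm]
    exact abs_measureReal_sub_le_measureReal_symmDiff hW.nullMeasurableSet hE.nullMeasurableSet
  have hprod : |μ.real V * μ.real W - p ^ 2| ≤ μ.real (E ∆ V) + μ.real (E ∆ W) :=
    calc |μ.real V * μ.real W - p ^ 2|
        = |(μ.real V - p) * μ.real W + p * (μ.real W - p)| := by ring_nf
      _ ≤ |μ.real V - p| * μ.real W + p * |μ.real W - p| := by
          grw [abs_add_le, abs_mul, abs_mul, abs_of_nonneg measureReal_nonneg,
            abs_of_nonneg (measureReal_nonneg (s := E))]
      _ ≤ μ.real (E ∆ V) * 1 + 1 * μ.real (E ∆ W) := by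
          gcongr
          exacts [measureReal_le_one, measureReal_le_one]
      _ = μ.real (E ∆ V) + μ.real (E ∆ W) := by ring
  calc |p - p ^ 2|
      = |(p - μ.real (V ∩ W)) + (μ.real (V ∩ W) - μ.real V * μ.real W)
          + (μ.real V * μ.real W - p ^ 2)| := by ring_nf
    _ ≤ |μ.real (V ∩ W) - p| + |μ.real (V ∩ W) - μ.real V * μ.real W|
          + |μ.real V * μ.real W - p ^ 2| := by
        rw [abs_sub_comm _ p]
        exact abs_add_three _ _ _
    _ ≤ _ := by linarith

lemma measure_eq_zero_or_one_of_forall_abs_measureReal_sub_sq_le {E : Set α}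
    (h : ∀ ε > 0, |μ.real E - μ.real E ^ 2| ≤ ε) : μ E = 0 ∨ μ E = 1 := by
  have hsq : μ.real E - μ.real E ^ 2 = 0 := abs_nonpos_iff.mp (le_of_forall_gt_imp_ge_of_dense h)
  rcases mul_eq_zero.mp (by linear_combination hsq : μ.real E * (1 - μ.real E) = 0) with h0 | h1
  · exact .inl ((measureReal_eq_zero_iff (μ := μ)).mp h0)
  · exact .inr ((ENNReal.toReal_eq_one_iff _).mp (by rw [← measureReal_def]; linarith))

end ZeroOne

lemma KolmogorovMixing.map_pi {Ω Γ M : Type*} [MeasurableSpace Ω] [MeasurableSpace M]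
    {Pr : Measure Ω} {X : Γ → Ω → M} (hX : Measurable fun ω k => X k ω)
    (hmix : KolmogorovMixing Pr X) :
    KolmogorovMixing (Pr.map fun ω k => X k ω) (fun k a => a k) := by
  intro J V hV ε hε
  obtain ⟨K, hK⟩ := hmix J V hV ε hε
  refine ⟨K, fun W hW => ?_⟩
  have hVm := hV.measurableSet
  have hWm := hW.measurableSet
  show |(Pr.map _ (V ∩ W)).toReal - (Pr.map _ V).toReal * (Pr.map _ W).toReal| < ε
  rw [Measure.map_apply hX hVm, Measure.map_apply hX hWm, Measure.map_apply hX (hVm.inter hWm)]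
  exact hK W hW

theorem measure_eq_zero_or_one_of_kolmogorovMixing {Γ M : Type*} [MeasurableSpace M]
    (μ : Measure (Γ → M)) [IsProbabilityMeasure μ] (hmix : KolmogorovMixing μ fun k a => a k)
    {E : Set (Γ → M)} (hE : MeasurableSet E)
    (hsym : ∀ J : Finset Γ, ∃ π : Γ → Γ,
      (∀ a : Γ → M, a ∈ E ↔ (fun k => a (π k)) ∈ E) ∧ (∀ j ∈ J, π j ∉ J) ∧
      MeasurePreserving (fun (a : Γ → M) k => a (π k)) μ μ) :
    μ E = 0 ∨ μ E = 1 := by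
  classical
  refine measure_eq_zero_or_one_of_forall_abs_measureReal_sub_sq_le μ fun ε hε => ?_
  have hε5 : 0 < ε / 5 := by positivity
  obtain ⟨V, hVcyl, hEV⟩ := exists_mem_measurableCylinders_measureReal_symmDiff_lt μ hE hε5
  have hV : MeasurableSet V := .of_mem_measurableCylinders hVcyl
  obtain ⟨J, hJ⟩ := exists_finset_determinedBy_of_mem_measurableCylinders hVcyl
  obtain ⟨K, hK⟩ := hmix J V hJ (ε / 5) hε5
  obtain ⟨π, hπE, hπJK, hπμ⟩ := hsym (J ∪ K)
  set W := (fun (a : Γ → M) k => a (π k)) ⁻¹' V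
  have hWK : DeterminedBy W (↑K : Set Γ)ᶜ := by
    refine (hJ.preimage_comp π).mono ?_
    rintro _ ⟨j, hj, rfl⟩ hjK
    exact hπJK j (Finset.mem_union_left _ hj) (Finset.mem_union_right _ hjK)
  have hEW : μ.real (E ∆ W) = μ.real (E ∆ V) := by
    have hπE' : (fun (a : Γ → M) k => a (π k)) ⁻¹' E = E := ext fun a => (hπE a).symm
    rw [← hπμ.measureReal_preimage (hE.symmDiff hV).nullMeasurableSet, preimage_symmDiff, hπE']
  have hmixVW : |μ.real (V ∩ W) - μ.real V * μ.real W| < ε / 5 := hK W hWK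
  have hsq := abs_measureReal_sub_sq_le_s4 μ hE hV hWK.measurableSet
  linarith

theorem kolmogorov_mixing_symmetric_zero_one_law_general
    {Ω M Γ : Type*} [MeasurableSpace Ω] [MeasurableSpace M]
    (Pr : Measure Ω) [IsProbabilityMeasure Pr]
    (X : Γ → Ω → M) (hmeas : ∀ k, Measurable (X k))
    (hmix : KolmogorovMixing Pr X)
    (E : Set (Γ → M)) (hE : MeasurableSet E)
    (hsym : ∀ J : Finset Γ, ∃ π : Γ → Γ,
      (∀ a : Γ → M, a ∈ E ↔ (fun k => a (π k)) ∈ E) ∧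
      (∀ j ∈ J, π j ∉ J) ∧
      Measure.map (fun ω (k : Γ) => X (π k) ω) Pr = Measure.map (fun ω (k : Γ) => X k ω) Pr) :
    Pr {ω | (fun k => X k ω) ∈ E} = 0 ∨ Pr {ω | (fun k => X k ω) ∈ E} = 1 := by
  have hX : Measurable fun ω k => X k ω := measurable_pi_lambda _ hmeas
  have : IsProbabilityMeasure (Pr.map fun ω k => X k ω) :=
    Measure.isProbabilityMeasure_map hX.aemeasurable
  have hlaw : Pr {ω | (fun k => X k ω) ∈ E} = Pr.map (fun ω k => X k ω) E :=
    (Measure.map_apply hX hE).symm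
  rw [hlaw]
  refine measure_eq_zero_or_one_of_kolmogorovMixing _ (hmix.map_pi hX) hE fun J => ?_
  obtain ⟨π, hπE, hπJ, hπX⟩ := hsym J
  have hshift : Measurable fun (a : Γ → M) k => a (π k) :=
    measurable_pi_lambda _ fun k => measurable_pi_apply (π k)
  exact ⟨π, hπE, hπJ, hshift, by rw [Measure.map_map hshift hX]; exact hπX⟩

/-- **Zero-one law for asymptotically independent random variables.**
If the family `X` has the Kolmogorov mixing property and for every finite `J ⊆ Γ`
the event `E` has a positional symmetry `π` with `π(J) ∩ J = ∅` such that `X` and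
`X^π` have the same distribution, then `P(X ∈ E) ∈ {0,1}`. -/
theorem kolmogorov_mixing_symmetric_zero_one_law
    {Ω M Γ : Type*} [MeasurableSpace Ω] [MeasurableSpace M] [Countable Γ]
    (Pr : Measure Ω) [IsProbabilityMeasure Pr]
    (X : Γ → Ω → M) (hmeas : ∀ k, Measurable (X k))
    (hmix : KolmogorovMixing Pr X)
    (E : Set (Γ → M)) (hE : MeasurableSet E)
    (hsym : ∀ J : Finset Γ, ∃ π : Γ → Γ,
      (∀ a : Γ → M, a ∈ E ↔ (fun k => a (π k)) ∈ E) ∧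
      (∀ j ∈ J, π j ∉ J) ∧
      Measure.map (fun ω (k : Γ) => X (π k) ω) Pr = Measure.map (fun ω (k : Γ) => X k ω) Pr) :
    Pr {ω | (fun k => X k ω) ∈ E} = 0 ∨ Pr {ω | (fun k => X k ω) ∈ E} = 1 :=
  kolmogorov_mixing_symmetric_zero_one_law_general Pr X hmeas hmix E hE hsym
end

section
/- (Zero-one law for non-i.i.d. random variables) Let Γ be a countable set, M a measurable space, and X = (X_k)_{k∈Γ} a family of random variables with values in M. Let E ⊆ M^Γ be a measurable event, and suppose that for every finite set J ⊆ Γ, every measurable map φ : M^J → Σ into a finite set Σ, and every ε, δ > 0, the event E has a positional symmetry π : Γ → Γ such that (i) the random variables φ(X_J) and φ(X^π_J) are ε-dependent, and (ii) the distributions of X = (X_k)_{k∈Γ} and X^π = (X_{π(k)})_{k∈Γ} satisfy ‖law(X) − law(X^π)‖_TV < δ. Then P(X ∈ E) ∈ {0, 1}. -/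
/-!
Approximate `E`, in the law of `X`, by a cylinder `C` depending on finitely many coordinates `J`.
A symmetry `π` adapted to the observable `1_C` leaves the event `{X ∈ E}` unchanged, so
`P(X ∈ E) = P(X ∈ E, X^π ∈ E)`. Since `X^π` has almost the law of `X`, `C` also approximates `E`
in the law of `X^π`, hence `P(X ∈ E, X^π ∈ E) ≈ P(X ∈ C, X^π ∈ C) ≈ P(X ∈ C) P(X^π ∈ C)
≈ P(X ∈ E)²`. The errors are arbitrarily small, so
`P(X ∈ E) = P(X ∈ E)²`.
-/

open MeasureTheory

open scoped symmDiff

theorem Set.inter_symmDiff_inter_subset {α : Type*} (s t s' t' : Set α) :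
    (s ∩ t) ∆ (s' ∩ t') ⊆ s ∆ s' ∪ t ∆ t' := by
  intro x
  simp only [Set.mem_symmDiff, Set.mem_union, Set.mem_inter_iff]
  tauto

section

variable {α Ω : Type*} [MeasurableSpace α] [MeasurableSpace Ω]

theorem abs_measureReal_sub_le_tvDist (μ ν : Measure α) [IsFiniteMeasure μ] [IsFiniteMeasure ν]
    {s : Set α} (hs : MeasurableSet s) : |μ.real s - ν.real s| ≤ tvDist μ ν := by
  refine le_ciSup (f := fun A : {A : Set α // MeasurableSet A} => |μ.real A - ν.real A|)
    ⟨μ.real .univ + ν.real .univ, ?_⟩ ⟨s, hs⟩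
  rintro _ ⟨A, rfl⟩
  exact abs_sub_le_of_nonneg_of_le measureReal_nonneg
    ((measureReal_mono (Set.subset_univ _)).trans (le_add_of_nonneg_right measureReal_nonneg))
    measureReal_nonneg
    ((measureReal_mono (Set.subset_univ _)).trans (le_add_of_nonneg_left measureReal_nonneg))

theorem measureReal_preimage_le_add_tvDist (P : Measure Ω) [IsFiniteMeasure P] {Y Y' : Ω → α}
    (hY : Measurable Y) (hY' : Measurable Y') {s : Set α} (hs : MeasurableSet s) :
    P.real (Y' ⁻¹' s) ≤ P.real (Y ⁻¹' s) + tvDist (P.map Y) (P.map Y') := by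
  have := abs_measureReal_sub_le_tvDist (P.map Y) (P.map Y') hs
  rw [map_measureReal_apply hY hs, map_measureReal_apply hY' hs] at this
  linarith [(abs_le.mp this).1]

variable {P : Measure Ω}

theorem abs_measureReal_inter_sub_inter_le [IsFiniteMeasure P] {s t s' t' : Set Ω}
    (hs : NullMeasurableSet s P) (ht : NullMeasurableSet t P)
    (hs' : NullMeasurableSet s' P) (ht' : NullMeasurableSet t' P) :
    |P.real (s ∩ t) - P.real (s' ∩ t')| ≤ P.real (s ∆ s') + P.real (t ∆ t') :=
  calc |P.real (s ∩ t) - P.real (s' ∩ t')| ≤ P.real ((s ∩ t) ∆ (s' ∩ t')) :=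
        abs_measureReal_sub_le_measureReal_symmDiff (hs.inter ht) (hs'.inter ht')
    _ ≤ P.real (s ∆ s' ∪ t ∆ t') := measureReal_mono (Set.inter_symmDiff_inter_subset ..)
    _ ≤ P.real (s ∆ s') + P.real (t ∆ t') := measureReal_union_le _ _

theorem abs_mul_sub_sq_le (a : ℝ) {b x : ℝ} (hb : |b| ≤ 1) (hx : |x| ≤ 1) :
    |a * b - x ^ 2| ≤ |a - x| + |b - x| :=
  calc |a * b - x ^ 2| = |(a - x) * b + x * (b - x)| := by congr 1; ring
    _ ≤ |a - x| * |b| + |x| * |b - x| := by rw [← abs_mul, ← abs_mul]; exact abs_add_le _ _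
    _ ≤ |a - x| + |b - x| :=
      add_le_add (mul_le_of_le_one_right (abs_nonneg _) hb)
        (mul_le_of_le_one_left (abs_nonneg _) hx)

theorem abs_measureReal_sub_sq_le_s5 [IsProbabilityMeasure P] {s c c' : Set Ω}
    (hs : NullMeasurableSet s P) (hc : NullMeasurableSet c P) (hc' : NullMeasurableSet c' P) :
    |P.real s - P.real s ^ 2| ≤
      2 * (P.real (s ∆ c) + P.real (s ∆ c')) + |P.real (c ∩ c') - P.real c * P.real c'| := by
  have hinter := abs_measureReal_inter_sub_inter_le hs hs hc hc'
  rw [Set.inter_self] at hinter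
  have hcs := abs_measureReal_sub_le_measureReal_symmDiff hc hs
  have hc's := abs_measureReal_sub_le_measureReal_symmDiff hc' hs
  rw [symmDiff_comm] at hcs hc's
  have habs_le_one (t : Set Ω) : |P.real t| ≤ 1 :=
    (abs_of_nonneg measureReal_nonneg).trans_le measureReal_le_one
  have hprod := abs_mul_sub_sq_le (P.real c) (habs_le_one c') (habs_le_one s)
  linarith [abs_sub_le (P.real s) (P.real (c ∩ c')) (P.real s ^ 2),
    abs_sub_le (P.real (c ∩ c')) (P.real c * P.real c') (P.real s ^ 2)]

theorem abs_measureReal_preimage_sub_sq_le [IsProbabilityMeasure P] {Y Y' : Ω → α}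
    (hY : Measurable Y) (hY' : Measurable Y') {s c : Set α} (hs : MeasurableSet s)
    (hc : MeasurableSet c) (hs' : Y' ⁻¹' s = Y ⁻¹' s) :
    |P.real (Y ⁻¹' s) - P.real (Y ⁻¹' s) ^ 2| ≤
      2 * (2 * (P.map Y).real (s ∆ c) + tvDist (P.map Y) (P.map Y')) +
        |P.real (Y ⁻¹' c ∩ Y' ⁻¹' c) - P.real (Y ⁻¹' c) * P.real (Y' ⁻¹' c)| := by
  have happrox : P.real ((Y ⁻¹' s) ∆ (Y ⁻¹' c)) = (P.map Y).real (s ∆ c) := by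
    rw [← Set.preimage_symmDiff, map_measureReal_apply hY (hs.symmDiff hc)]
  have happrox' : P.real ((Y ⁻¹' s) ∆ (Y' ⁻¹' c)) ≤
      (P.map Y).real (s ∆ c) + tvDist (P.map Y) (P.map Y') := by
    rw [← hs', ← Set.preimage_symmDiff, map_measureReal_apply hY (hs.symmDiff hc)]
    exact measureReal_preimage_le_add_tvDist P hY hY' (hs.symmDiff hc)
  have := abs_measureReal_sub_sq_le_s5 (P := P) (hY hs).nullMeasurableSet (hY hc).nullMeasurableSet
    (hY' hc).nullMeasurableSet
  linarith

theorem measure_eq_zero_or_one_of_measureReal_eq_sq [IsProbabilityMeasure P] {s : Set Ω}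
    (h : P.real s ^ 2 = P.real s) : P s = 0 ∨ P s = 1 := by
  rcases IsIdempotentElem.iff_eq_zero_or_one.mp ((sq _).symm.trans h) with h0 | h1
  · exact .inl ((measureReal_eq_zero_iff).mp h0)
  · exact .inr ((ENNReal.toReal_eq_one_iff _).mp h1)

end

theorem MeasureTheory.Measure.exists_cylinder_measureReal_symmDiff_lt {ι : Type*} {α : ι → Type*}
    [∀ i, MeasurableSpace (α i)] (μ : Measure (∀ i, α i)) [IsFiniteMeasure μ] {s : Set (∀ i, α i)}
    (hs : MeasurableSet s) {ε : ℝ} (hε : 0 < ε) :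
    ∃ (J : Finset ι) (F : Set (∀ j : J, α j)), MeasurableSet F ∧
      μ.real (s ∆ (J.restrict ⁻¹' F)) < ε := by
  obtain ⟨C, hC, hsC⟩ := (Measure.MeasureDense.of_generateFrom_isSetAlgebra_finite μ
    isSetAlgebra_measurableCylinders generateFrom_measurableCylinders.symm).approx s hs
    (measure_ne_top μ s) ε hε
  obtain ⟨J, F, hF, rfl⟩ := (mem_measurableCylinders C).mp hC
  exact ⟨J, F, hF, (ENNReal.toReal_lt_of_lt_ofReal hsC)⟩

theorem non_iid_zero_one_law_general
    {Ω M Γ : Type*} [MeasurableSpace Ω] [MeasurableSpace M]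
    (Pr : Measure Ω) [IsProbabilityMeasure Pr]
    (X : Γ → Ω → M) (hmeas : ∀ k, Measurable (X k))
    (E : Set (Γ → M)) (hE : MeasurableSet E)
    (hsym : ∀ (J : Finset Γ) (Sig : Type) (_ : Fintype Sig) (_ : MeasurableSpace Sig)
      (φ : ((j : J) → M) → Sig), Measurable φ → ∀ ε δ : ℝ, 0 < ε → 0 < δ →
      ∃ π : Γ → Γ,
        (∀ a : Γ → M, a ∈ E ↔ (fun k => a (π k)) ∈ E) ∧
        (∀ A B : Set Sig, MeasurableSet A → MeasurableSet B →
          |(Pr {ω | φ (fun j : J => X j ω) ∈ A ∧ φ (fun j : J => X (π j) ω) ∈ B}).toReal -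
            (Pr {ω | φ (fun j : J => X j ω) ∈ A}).toReal *
              (Pr {ω | φ (fun j : J => X (π j) ω) ∈ B}).toReal| < ε) ∧
        tvDist (Measure.map (fun ω (k : Γ) => X k ω) Pr)
          (Measure.map (fun ω (k : Γ) => X (π k) ω) Pr) < δ) :
    Pr {ω | (fun k => X k ω) ∈ E} = 0 ∨ Pr {ω | (fun k => X k ω) ∈ E} = 1 := by
  set Y : Ω → Γ → M := fun ω k => X k ω
  have hY : Measurable Y := measurable_pi_lambda _ hmeas
  refine measure_eq_zero_or_one_of_measureReal_eq_sq (eq_of_forall_dist_le fun ε hε => ?_).symm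
  have hη : 0 < ε / 7 := by positivity
  obtain ⟨J, F, hF, hEF⟩ := (Pr.map Y).exists_cylinder_measureReal_symmDiff_lt hE hη
  obtain ⟨π, hπE, hdep, htv⟩ := hsym J Prop inferInstance inferInstance (· ∈ F)
    (measurableSet_setOfPred.mp hF) (ε / 7) (ε / 7) hη hη
  set C : Set (Γ → M) := J.restrict ⁻¹' F
  set Yπ : Ω → Γ → M := fun ω k => X (π k) ω
  have hindep :
      |Pr.real (Y ⁻¹' C ∩ Yπ ⁻¹' C) - Pr.real (Y ⁻¹' C) * Pr.real (Yπ ⁻¹' C)| < ε / 7 := by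
    have := hdep {True} {True} trivial trivial
    simp only [Set.mem_singleton_iff, eq_iff_iff, iff_true] at this
    exact this
  have := abs_measureReal_preimage_sub_sq_le (P := Pr) (Y' := Yπ) (c := C) hY
    (measurable_pi_lambda _ fun k => hmeas (π k)) hE (J.measurable_restrict hF)
    (Set.ext fun ω => (hπE (Y ω)).symm)
  calc dist _ _ = |Pr.real (Y ⁻¹' E) - Pr.real (Y ⁻¹' E) ^ 2| := Real.dist_eq _ _
    _ ≤ ε := by linarith

/-- **Zero-one law for non-i.i.d. random variables.**
Suppose that for every finite `J ⊆ Γ`, every finitary observable `φ : M^J → Σ`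
(a measurable map into a finite set), and every `ε, δ > 0`, the event `E` has a
positional symmetry `π` such that (i) `φ(X_J)` and `φ(X^π_J)` are `ε`-dependent, and
(ii) the distributions of `X` and `X^π` are `δ`-close in total variation.
Then `P(X ∈ E) ∈ {0,1}`. -/
theorem non_iid_zero_one_law
    {Ω M Γ : Type*} [MeasurableSpace Ω] [MeasurableSpace M] [Countable Γ]
    (Pr : Measure Ω) [IsProbabilityMeasure Pr]
    (X : Γ → Ω → M) (hmeas : ∀ k, Measurable (X k))
    (E : Set (Γ → M)) (hE : MeasurableSet E)
    (hsym : ∀ (J : Finset Γ) (Sig : Type) (_ : Fintype Sig) (_ : MeasurableSpace Sig)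
      (φ : ((j : J) → M) → Sig), Measurable φ → ∀ ε δ : ℝ, 0 < ε → 0 < δ →
      ∃ π : Γ → Γ,
        (∀ a : Γ → M, a ∈ E ↔ (fun k => a (π k)) ∈ E) ∧
        (∀ A B : Set Sig, MeasurableSet A → MeasurableSet B →
          |(Pr {ω | φ (fun j : J => X j ω) ∈ A ∧ φ (fun j : J => X (π j) ω) ∈ B}).toReal -
            (Pr {ω | φ (fun j : J => X j ω) ∈ A}).toReal *
              (Pr {ω | φ (fun j : J => X (π j) ω) ∈ B}).toReal| < ε) ∧
        tvDist (Measure.map (fun ω (k : Γ) => X k ω) Pr)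
          (Measure.map (fun ω (k : Γ) => X (π k) ω) Pr) < δ) :
    Pr {ω | (fun k => X k ω) ∈ E} = 0 ∨ Pr {ω | (fun k => X k ω) ∈ E} = 1 :=
  non_iid_zero_one_law_general Pr X hmeas E hE hsym
end

section
/- (Zero-one law for sufficiently symmetric infinite random graphs) Let G = (V, E) be a countably infinite simple graph such that for every finite set A ⊆ V of vertices, G has a graph automorphism θ with θ(A) ∩ A = ∅. Fix p ∈ [0,1] and let (X_e)_{e∈E} be i.i.d. Bernoulli(p) random variables indexed by the edges, so that X encodes the random subgraph of G in which each edge is independently kept with probability p. Then for every measurable subset P ⊆ {0,1}^E that is invariant under the maps on {0,1}^E induced by all automorphisms of G (i.e., P represents a graph-theoretic property of subgraphs of G), one has P(X ∈ P) ∈ {0, 1}. -/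
/-!
Approximate the property `P` by an event `C` depending only on the edges of a finite set `F`.
An automorphism moving the vertices of `F` off themselves induces an edge permutation `σ` moving
`F` off itself, so `C` and its translate `σC` are independent. Both `P` and the law of the i.i.d.
edge family are invariant under `σ`, so `σC` approximates `P` as well, and
`Pr(P) ≈ Pr(C ∩ σC) = Pr(C)² ≈ Pr(P)²`. Letting the error tend to zero, `Pr(P) = Pr(P)²`.
-/

open MeasureTheory ProbabilityTheory ENNReal symmDiff

lemma eq_zero_or_one_of_forall_near_sq {a : ℝ} (ha₀ : 0 ≤ a) (ha₁ : a ≤ 1)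
    (h : ∀ ε > 0, ∃ c : ℝ, 0 ≤ c ∧ c ≤ 1 ∧ |a - c| ≤ ε ∧ |a - c * c| ≤ 2 * ε) :
    a = 0 ∨ a = 1 := by
  have hsmall : ∀ ε > 0, |a - a * a| ≤ 4 * ε := by
    intro ε hε
    obtain ⟨c, hc₀, hc₁, hac, hacc⟩ := h ε hε
    calc |a - a * a| = |(a - c * c) + (c - a) * (c + a)| := by ring_nf
      _ ≤ |a - c * c| + |c - a| * |c + a| := by rw [← abs_mul]; exact abs_add_le _ _
      _ ≤ 2 * ε + ε * 2 := by
          rw [abs_sub_comm c a, abs_of_nonneg (by linarith : 0 ≤ c + a)]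
          gcongr
          linarith
      _ = 4 * ε := by ring
  have hidem : a * (1 - a) = 0 := by
    have : |a - a * a| ≤ 0 := le_of_forall_pos_le_add fun ε hε => by
      simpa [mul_div_cancel₀] using hsmall (ε / 4) (by positivity)
    linarith [abs_nonpos_iff.mp this]
  rcases mul_eq_zero.mp hidem with h | h
  · exact Or.inl h
  · exact Or.inr (by linarith)

lemma Set.inter_preimage_symmDiff_inter_preimage_subset {α : Type*} (T : α → α) (A C : Set α) :
    (A ∩ T ⁻¹' A) ∆ (C ∩ T ⁻¹' C) ⊆ A ∆ C ∪ T ⁻¹' (A ∆ C) := by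
  intro x
  simp only [Set.mem_symmDiff, Set.mem_inter_iff, Set.mem_preimage, Set.mem_union]
  tauto

namespace MeasureTheory.Measure

theorem MeasureDense.measure_eq_zero_or_one_of_indep_preimage {α : Type*} [MeasurableSpace α]
    {μ : Measure α} [IsProbabilityMeasure μ] {𝒜 : Set (Set α)} (h𝒜 : μ.MeasureDense 𝒜)
    {A : Set α} (hA : MeasurableSet A)
    (hindep : ∀ C ∈ 𝒜, ∃ T : α → α, MeasurePreserving T μ μ ∧ T ⁻¹' A = A ∧
      μ (C ∩ T ⁻¹' C) = μ C * μ C) :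
    μ A = 0 ∨ μ A = 1 := by
  suffices μ.real A = 0 ∨ μ.real A = 1 by
    refine this.imp (measureReal_eq_zero_iff).mp fun h => ?_
    rwa [measureReal_def, ENNReal.toReal_eq_one_iff] at h
  refine eq_zero_or_one_of_forall_near_sq measureReal_nonneg measureReal_le_one fun ε hε => ?_
  obtain ⟨C, hC𝒜, hAC⟩ := h𝒜.approx A hA (measure_ne_top _ _) ε hε
  obtain ⟨T, hT, hTA, hCT⟩ := hindep C hC𝒜
  have hC : MeasurableSet C := h𝒜.measurable C hC𝒜
  have hδ : μ.real (A ∆ C) ≤ ε := ENNReal.toReal_le_of_le_ofReal hε.le hAC.le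
  have hTδ : μ.real (T ⁻¹' (A ∆ C)) = μ.real (A ∆ C) :=
    hT.measureReal_preimage (hA.symmDiff hC).nullMeasurableSet
  refine ⟨μ.real C, measureReal_nonneg, measureReal_le_one, ?_, ?_⟩
  · exact (abs_measureReal_sub_le_measureReal_symmDiff hA.nullMeasurableSet
      hC.nullMeasurableSet).trans hδ
  · have hAA : μ.real (A ∩ T ⁻¹' A) = μ.real A := by rw [hTA, Set.inter_self]
    have hCC : μ.real (C ∩ T ⁻¹' C) = μ.real C * μ.real C := by
      rw [measureReal_def, hCT, ENNReal.toReal_mul, measureReal_def]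
    calc |μ.real A - μ.real C * μ.real C|
        ≤ μ.real ((A ∩ T ⁻¹' A) ∆ (C ∩ T ⁻¹' C)) := by
          rw [← hAA, ← hCC]
          exact abs_measureReal_sub_le_measureReal_symmDiff
            (hA.inter (hT.measurable hA)).nullMeasurableSet
            (hC.inter (hT.measurable hC)).nullMeasurableSet
      _ ≤ μ.real (A ∆ C ∪ T ⁻¹' (A ∆ C)) :=
          measureReal_mono (Set.inter_preimage_symmDiff_inter_preimage_subset T A C)
      _ ≤ μ.real (A ∆ C) + μ.real (T ⁻¹' (A ∆ C)) := measureReal_union_le _ _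
      _ ≤ 2 * ε := by linarith

variable {ι S : Type*} [MeasurableSpace S] (β : Measure S) [IsProbabilityMeasure β]

lemma measurePreserving_comp_equiv_infinitePi (σ : ι ≃ ι) :
    MeasurePreserving (fun x : ι → S => x ∘ σ) (infinitePi fun _ => β)
      (infinitePi fun _ => β) := by
  refine ⟨by fun_prop, ?_⟩
  convert infinitePi_map_piCongrLeft (X := fun _ : ι => S) (fun _ => β) σ.symm using 2
  ext x i
  simpa [MeasurableEquiv.coe_piCongrLeft] using
    (Equiv.piCongrLeft_apply_apply (P := fun _ => S) σ.symm x (σ i)).symm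

lemma infinitePi_cylinder_inter_preimage_comp_equiv {σ : ι ≃ ι} {F : Finset ι}
    (hF : Disjoint F (F.map σ.toEmbedding)) {C : Set (F → S)} (hC : MeasurableSet C) :
    infinitePi (fun _ => β) (cylinder F C ∩ (fun x : ι → S => x ∘ σ) ⁻¹' cylinder F C) =
      infinitePi (fun _ => β) (cylinder F C) * infinitePi (fun _ => β) (cylinder F C) := by
  have hind := (iIndepFun_infinitePi (P := fun _ : ι => β) (X := fun _ => id)
    fun _ => measurable_id).indepFun_finset F (F.map σ.toEmbedding) hF
    fun i => measurable_pi_apply i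
  have hshift : (fun x : ι → S => x ∘ σ) ⁻¹' cylinder F C =
      (fun x (j : F.map σ.toEmbedding) => x j) ⁻¹'
        ((fun y (i : F) => y ⟨σ i, Finset.mem_map_of_mem _ i.2⟩) ⁻¹' C) := rfl
  calc _ = infinitePi (fun _ => β) (cylinder F C) *
        infinitePi (fun _ => β) ((fun x : ι → S => x ∘ σ) ⁻¹' cylinder F C) := by
        rw [hshift]
        exact hind.measure_inter_preimage_eq_mul _ _ hC
          (measurable_pi_lambda _ (fun i => measurable_pi_apply _) hC)
    _ = _ := by
        rw [(measurePreserving_comp_equiv_infinitePi β σ).measure_preimage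
          (MeasurableSet.cylinder F hC).nullMeasurableSet]

theorem infinitePi_eq_zero_or_one_of_invariant {A : Set (ι → S)} (hA : MeasurableSet A)
    (hσ : ∀ F : Finset ι, ∃ σ : ι ≃ ι, Disjoint F (F.map σ.toEmbedding) ∧
      (fun x : ι → S => x ∘ σ) ⁻¹' A = A) :
    infinitePi (fun _ => β) A = 0 ∨ infinitePi (fun _ => β) A = 1 := by
  have hdense : (infinitePi fun _ => β).MeasureDense (measurableCylinders fun _ : ι => S) :=
    .of_generateFrom_isSetAlgebra_finite _ isSetAlgebra_measurableCylinders
      generateFrom_measurableCylinders.symm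
  refine hdense.measure_eq_zero_or_one_of_indep_preimage hA fun _ hcyl => ?_
  obtain ⟨F, C, hC, rfl⟩ := (mem_measurableCylinders _).mp hcyl
  obtain ⟨σ, hσF, hσA⟩ := hσ F
  exact ⟨_, measurePreserving_comp_equiv_infinitePi β σ, hσA,
    infinitePi_cylinder_inter_preimage_comp_equiv β hσF hC⟩

end MeasureTheory.Measure

theorem ProbabilityTheory.iIndepFun.measure_eq_zero_or_one_of_invariant
    {ι Ω S : Type*} [MeasurableSpace Ω] [MeasurableSpace S] {P : Measure Ω}
    {X : ι → Ω → S} (hX : ∀ i, Measurable (X i)) (hind : iIndepFun X P)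
    {β : Measure S} [IsProbabilityMeasure β] (hβ : ∀ i, P.map (X i) = β)
    {A : Set (ι → S)} (hA : MeasurableSet A)
    (hσ : ∀ F : Finset ι, ∃ σ : ι ≃ ι, Disjoint F (F.map σ.toEmbedding) ∧
      (fun x : ι → S => x ∘ σ) ⁻¹' A = A) :
    P ((fun ω i => X i ω) ⁻¹' A) = 0 ∨ P ((fun ω i => X i ω) ⁻¹' A) = 1 := by
  have hlaw : P.map (fun ω i => X i ω) = Measure.infinitePi fun _ => β := by
    simp only [hind.map_fun_eq_infinitePi_map hX, hβ]
  rw [← Measure.map_apply (measurable_pi_lambda _ hX) hA, hlaw]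
  exact Measure.infinitePi_eq_zero_or_one_of_invariant β hA hσ

namespace SimpleGraph

variable {V : Type*} {G : SimpleGraph V}

lemma Iso.disjoint_map_mapEdgeSet (θ : G ≃g G) {F : Finset G.edgeSet} {A : Set V}
    (hFA : ∀ e ∈ F, ∀ v ∈ (e : Sym2 V), v ∈ A) (hθA : ∀ v ∈ A, θ v ∉ A) :
    Disjoint F (F.map θ.mapEdgeSet.toEmbedding) := by
  rw [Finset.disjoint_right]
  intro e' he' he'F
  obtain ⟨e, he, rfl⟩ := Finset.mem_map.mp he'
  obtain ⟨v, hv⟩ : ∃ v, v ∈ (e : Sym2 V) := ⟨_, Sym2.out_fst_mem _⟩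
  exact hθA v (hFA e he v hv) (hFA _ he'F _ (Sym2.mem_map.mpr ⟨v, hv, rfl⟩))

lemma exists_iso_disjoint_map_mapEdgeSet
    (hsym : ∀ A : Finset V, ∃ θ : G ≃g G, ∀ v ∈ A, θ v ∉ A) (F : Finset G.edgeSet) :
    ∃ θ : G ≃g G, Disjoint F (F.map θ.mapEdgeSet.toEmbedding) := by
  classical
  obtain ⟨θ, hθ⟩ := hsym (F.biUnion fun e => (e : Sym2 V).toFinset)
  exact ⟨θ, θ.disjoint_map_mapEdgeSet
    (fun e he v hv => Finset.mem_biUnion.mpr ⟨e, he, Sym2.mem_toFinset.mpr hv⟩) hθ⟩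

end SimpleGraph

/-- **Zero-one law for sufficiently symmetric infinite random graphs.**
Let `G` be a countably infinite simple graph such that for every finite set `A` of
vertices there is an automorphism `θ` of `G` with `θ(A) ∩ A = ∅`.  Let `(X_e)_{e ∈ E(G)}`
be i.i.d. Bernoulli(`p`) random variables encoding a random subgraph of `G`.
Then every measurable set `P ⊆ {0,1}^{E(G)}` invariant under the maps induced by all
automorphisms of `G` (a graph-theoretic property) satisfies `P(X ∈ P) ∈ {0,1}`. -/
theorem random_subgraph_zero_one_law
    {V : Type*} (G : SimpleGraph V)
    (hsym : ∀ A : Finset V, ∃ θ : G ≃g G, ∀ v ∈ A, θ v ∉ A)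
    {Ω : Type*} [MeasurableSpace Ω] (Pr : Measure Ω)
    (p : ℝ≥0∞) (hp : p ≤ 1)
    (X : G.edgeSet → Ω → Bool) (hmeas : ∀ e, Measurable (X e))
    (hindep : iIndepFun X Pr)
    (hdist : ∀ e, Measure.map (X e) Pr = (PMF.bernoulli p.toNNReal (by simpa using ENNReal.toNNReal_mono ENNReal.one_ne_top hp)).toMeasure)
    (P : Set (G.edgeSet → Bool)) (hP : MeasurableSet P)
    (hinv : ∀ (θ : G ≃g G) (a : G.edgeSet → Bool),
      a ∈ P ↔ (fun e => a (θ.mapEdgeSet e)) ∈ P) :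
    Pr {ω | (fun e => X e ω) ∈ P} = 0 ∨ Pr {ω | (fun e => X e ω) ∈ P} = 1 := by
  refine hindep.measure_eq_zero_or_one_of_invariant hmeas hdist hP fun F => ?_
  obtain ⟨θ, hθ⟩ := G.exists_iso_disjoint_map_mapEdgeSet hsym F
  exact ⟨θ.mapEdgeSet, hθ, Set.ext fun a => (hinv θ a).symm⟩
end

section
/- (Zero-one law for the trace of simple symmetric renormalization maps) Let M be a measurable space, ℓ ≥ 0 an integer, and φ : M^{2ℓ+1} → M a measurable map. Let T : M^ℤ → M^ℤ be the simple renormalization map with local rule φ, i.e., T(a)_k = φ(a_{(2ℓ+1)k−ℓ}, …, a_{(2ℓ+1)k+ℓ}) for all a ∈ M^ℤ and k ∈ ℤ. Suppose φ has a positional symmetry (a permutation π of {1,…,2ℓ+1} with φ(a_{π(1)},…,a_{π(2ℓ+1)}) = φ(a_1,…,a_{2ℓ+1}) for all a_i ∈ M) that moves its central argument, i.e., π(ℓ+1) ≠ ℓ+1. Let X = (X_k)_{k∈ℤ} be a sequence of i.i.d. M-valued random variables and let X^T := (T^n(X)_0)_{n∈ℕ₀} be the trace of X under T. Then for every tail event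 E ⊆ M^{ℕ₀} (a measurable event not depending on any finite number of coordinates), one has P(X^T ∈ E) ∈ {0, 1}. -/
/-!
Write `B = 2ℓ + 1` and decompose every site as `m = B k - ℓ + j` with `j < B`, so that
`T a k` reads the block `{B k - ℓ + j}`. Lifting a site map `p` through this decomposition
(move block `k` to block `p k`) gives `T (a ∘ lift p) = T a ∘ p`. Let `π'` be `π` acting on the
central block `{-ℓ, …, ℓ}`; the symmetry of `φ` gives `T (b ∘ π') = T b`, hence
`σ_N = lift^[N] π'` satisfies `T^[n] (a ∘ σ_N) = T^[n] a` for all `n > N`. So for a tail event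
`E` the event `A = {X^T ∈ E}` is invariant under every `σ_N`. Since `π` moves the centre, `σ_N`
moves the sites feeding into `T^[N] a 0`, which include `[-N, N]`, off themselves.

The law of `X` is a product measure, preserved by the injective reindexings `σ_N`. Approximate
`A` by a cylinder `C` over `[-N, N]`: then `C` and `σ_N⁻¹ C` are independent and both are close
to `A`, so `P(A) ≈ P(A)²` (the Hewitt–Savage argument), whence `P(A) ∈ {0, 1}`.
-/

open MeasureTheory ProbabilityTheory Set
open scoped symmDiff

section ApproximateIndependence

variable {α : Type*} [MeasurableSpace α] {μ : Measure α} [IsProbabilityMeasure μ]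

lemma abs_measureReal_sub_le_measureReal_symmDiff (s t : Set α) :
    |μ.real s - μ.real t| ≤ μ.real (s ∆ t) := by
  have key : ∀ s t : Set α, μ.real s ≤ μ.real t + μ.real (s ∆ t) := fun s t =>
    (measureReal_mono (le_symmDiff_sup_left t s)).trans <|
      (measureReal_union_le _ _).trans_eq <| by rw [symmDiff_comm, add_comm]
  have hts := key t s
  rw [symmDiff_comm] at hts
  exact abs_le.mpr ⟨by linarith, by linarith [key s t]⟩

theorem measure_eq_zero_or_one_of_forall_approx_indep {A : Set α}
    (h : ∀ ε > 0, ∃ C D, μ (C ∩ D) = μ C * μ D ∧ μ.real (A ∆ C) < ε ∧ μ.real (A ∆ D) < ε) :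
    μ A = 0 ∨ μ A = 1 := by
  suffices hA : μ.real A * μ.real A = μ.real A by
    rcases eq_or_ne (μ.real A) 0 with h0 | h0
    · exact Or.inl ((measureReal_eq_zero_iff).mp h0)
    · exact Or.inr ((ENNReal.toReal_eq_one_iff _).mp ((mul_eq_left₀ h0).mp hA))
  refine eq_of_forall_dist_le fun δ hδ => ?_
  obtain ⟨C, D, hCD, hC, hD⟩ := h (δ / 4) (by positivity)
  have hCD' : μ.real (C ∩ D) = μ.real C * μ.real D := by
    simp only [measureReal_def, hCD, ENNReal.toReal_mul]
  have hsub : (A ∩ A) ∆ (C ∩ D) ⊆ (A ∆ C) ∪ (A ∆ D) := by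
    intro x
    simp only [mem_symmDiff, mem_inter_iff, mem_union]
    tauto
  have hACD := (abs_measureReal_sub_le_measureReal_symmDiff (μ := μ) (A ∩ A) (C ∩ D)).trans
    ((measureReal_mono hsub).trans (measureReal_union_le _ _))
  rw [inter_self, hCD'] at hACD
  have hAC := abs_measureReal_sub_le_measureReal_symmDiff (μ := μ) A C
  have hAD := abs_measureReal_sub_le_measureReal_symmDiff (μ := μ) A D
  have hA₀ : 0 ≤ μ.real A := measureReal_nonneg
  have hA₁ : μ.real A ≤ 1 := measureReal_le_one
  have hD₀ : 0 ≤ μ.real D := measureReal_nonneg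
  have hD₁ : μ.real D ≤ 1 := measureReal_le_one
  -- `x² - c d = x (x - d) + d (x - c)` with `x = μ.real A`, `c = μ.real C`, `d = μ.real D`
  rw [abs_le] at hACD hAC hAD
  rw [Real.dist_eq, abs_le]
  constructor <;> nlinarith

end ApproximateIndependence

section InfinitePi

variable {ι M : Type*} [MeasurableSpace M] (ν : Measure M) [IsProbabilityMeasure ν]

lemma measurePreserving_infinitePi_comp {σ : ι → ι} (hσ : σ.Injective) :
    MeasurePreserving (fun a i => a (σ i))
      (Measure.infinitePi fun _ : ι => ν) (Measure.infinitePi fun _ => ν) :=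
  ⟨by fun_prop, Measure.map_infinitePi_infinitePi_of_inj hσ⟩

lemma infinitePi_cylinder_inter_preimage_comp {F : Finset ι} {σ : ι → ι}
    (hF : Disjoint (F : Set ι) (σ '' F)) {S S' : Set (F → M)}
    (hS : MeasurableSet S) (hS' : MeasurableSet S') :
    Measure.infinitePi (fun _ => ν) (cylinder F S ∩ (fun a i => a (σ i)) ⁻¹' cylinder F S') =
      Measure.infinitePi (fun _ => ν) (cylinder F S) *
        Measure.infinitePi (fun _ => ν) ((fun a i => a (σ i)) ⁻¹' cylinder F S') := by
  classical
  have hind := (iIndepFun_infinitePi (P := fun _ : ι => ν) (X := fun _ => id)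
    fun _ => measurable_id).indepFun_finset F (F.image σ)
      (by rwa [← Finset.disjoint_coe, Finset.coe_image]) fun i => measurable_pi_apply i
  let R : (Π i : F.image σ, M) → Π i : F, M :=
    fun b i => b ⟨σ i, Finset.mem_image_of_mem σ i.2⟩
  exact (hind.comp measurable_id (by fun_prop : Measurable R)).measure_inter_preimage_eq_mul
    S S' hS hS'

theorem infinitePi_eq_zero_or_one_of_forall_exists_invariant {A : Set (ι → M)}
    (hA : MeasurableSet A) (h : ∀ F : Finset ι, ∃ σ : ι → ι, σ.Injective ∧
      Disjoint (F : Set ι) (σ '' F) ∧ (fun a i => a (σ i)) ⁻¹' A = A) :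
    Measure.infinitePi (fun _ => ν) A = 0 ∨ Measure.infinitePi (fun _ => ν) A = 1 := by
  have hdense : (Measure.infinitePi fun _ : ι => ν).MeasureDense
      (measurableCylinders fun _ => M) :=
    .of_generateFrom_isSetAlgebra_finite _ isSetAlgebra_measurableCylinders
      generateFrom_measurableCylinders.symm
  refine measure_eq_zero_or_one_of_forall_approx_indep fun ε hε => ?_
  obtain ⟨C, hC, hAC⟩ := hdense.approx A hA (measure_ne_top _ A) ε hε
  obtain ⟨F, S, hS, rfl⟩ := (mem_measurableCylinders C).mp hC
  obtain ⟨σ, hσ, hdisj, hAσ⟩ := h F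
  have hAC' : (Measure.infinitePi fun _ => ν).real (A ∆ cylinder F S) < ε :=
    ENNReal.toReal_lt_of_lt_ofReal hAC
  refine ⟨_, _, infinitePi_cylinder_inter_preimage_comp ν hdisj hS hS, hAC', ?_⟩
  rwa [← hAσ, ← preimage_symmDiff, measureReal_def,
    (measurePreserving_infinitePi_comp ν hσ).measure_preimage
      (hA.symmDiff (hS.cylinder F)).nullMeasurableSet]

end InfinitePi

lemma mem_iff_of_forall_add_eq {M : Type*} [MeasurableSpace M] {E : Set (ℕ → M)} {n : ℕ}
    (hE : MeasurableSet[MeasurableSpace.comap (fun (a : ℕ → M) (k : ℕ) => a (k + n))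
      MeasurableSpace.pi] E) {x y : ℕ → M} (hxy : ∀ k, x (k + n) = y (k + n)) :
    x ∈ E ↔ y ∈ E := by
  obtain ⟨E', -, rfl⟩ := hE
  exact Iff.of_eq (congrArg (· ∈ E') (funext hxy))

namespace Renormalization

variable (ℓ : ℕ) {M : Type*}

/-- `m ↦ (k, j)` with `m = (2ℓ+1) k - ℓ + j`: site `m` is the `j`-th argument of `φ` in
`renormalize ℓ φ a k`. -/
def blockEquiv : ℤ ≃ ℤ × Fin (2 * ℓ + 1) :=
  (Equiv.addRight (ℓ : ℤ)).trans (Int.divModEquiv (2 * ℓ + 1))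

def renormalize (φ : (Fin (2 * ℓ + 1) → M) → M) (a : ℤ → M) (k : ℤ) : M :=
  φ fun j => a ((blockEquiv ℓ).symm (k, j))

def blockLift (p : ℤ → ℤ) : ℤ → ℤ :=
  (blockEquiv ℓ).symm ∘ Prod.map p id ∘ blockEquiv ℓ

def centralEmbedding : Fin (2 * ℓ + 1) ↪ ℤ :=
  ⟨fun j => (blockEquiv ℓ).symm (0, j),
    (blockEquiv ℓ).symm.injective.comp (Prod.mk_right_injective 0)⟩

def centralIndex : Fin (2 * ℓ + 1) :=
  ⟨ℓ, Nat.lt_succ_of_le (Nat.le_mul_of_pos_left ℓ two_pos)⟩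

def centralPerm (π : Equiv.Perm (Fin (2 * ℓ + 1))) : Equiv.Perm ℤ :=
  π.viaFintypeEmbedding (centralEmbedding ℓ)

/-- The sites on which `(renormalize ℓ φ)^[N] a 0` depends. -/
def centralBlock : ℕ → Set ℤ
  | 0 => {0}
  | N + 1 => (fun m => (blockEquiv ℓ m).1) ⁻¹' centralBlock N

variable {ℓ}

lemma blockEquiv_symm_apply (k : ℤ) (j : Fin (2 * ℓ + 1)) :
    (blockEquiv ℓ).symm (k, j) = ((2 * ℓ + 1 : ℕ) : ℤ) * k - ℓ + ((j : ℕ) : ℤ) := by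
  simp [blockEquiv]
  ring

lemma blockEquiv_apply_fst (m : ℤ) :
    (blockEquiv ℓ m).1 = (m + ℓ) / ((2 * ℓ + 1 : ℕ) : ℤ) := by
  simp [blockEquiv]

lemma measurable_renormalize [MeasurableSpace M] {φ : (Fin (2 * ℓ + 1) → M) → M}
    (hφ : Measurable φ) : Measurable (renormalize ℓ φ) :=
  measurable_pi_lambda _ fun _ => hφ.comp <| measurable_pi_lambda _ fun _ => measurable_pi_apply _

lemma renormalize_comp_blockLift (φ : (Fin (2 * ℓ + 1) → M) → M) (a : ℤ → M) (p : ℤ → ℤ) :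
    renormalize ℓ φ (a ∘ blockLift ℓ p) = renormalize ℓ φ a ∘ p := by
  ext k
  simp [renormalize, blockLift]

lemma iterate_renormalize_comp_iterate_blockLift (φ : (Fin (2 * ℓ + 1) → M) → M) (N : ℕ)
    (a : ℤ → M) (p : ℤ → ℤ) :
    (renormalize ℓ φ)^[N] (a ∘ (blockLift ℓ)^[N] p) = (renormalize ℓ φ)^[N] a ∘ p := by
  induction N generalizing p with
  | zero => rfl
  | succ N ih =>
    rw [Function.iterate_succ_apply' (renormalize ℓ φ), Function.iterate_succ_apply (blockLift ℓ),
      ih, renormalize_comp_blockLift, Function.iterate_succ_apply']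

lemma renormalize_comp_centralPerm {φ : (Fin (2 * ℓ + 1) → M) → M}
    {π : Equiv.Perm (Fin (2 * ℓ + 1))}
    (hπφ : ∀ a : Fin (2 * ℓ + 1) → M, φ (fun i => a (π i)) = φ a) (b : ℤ → M) :
    renormalize ℓ φ (b ∘ centralPerm ℓ π) = renormalize ℓ φ b := by
  ext k
  rcases eq_or_ne k 0 with rfl | hk
  · exact (congrArg φ (funext fun j => congrArg b <|
      Equiv.Perm.viaFintypeEmbedding_apply_image π (centralEmbedding ℓ) j)).trans
      (hπφ fun j => b (centralEmbedding ℓ j))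
  · refine congrArg φ (funext fun j => congrArg b <|
      Equiv.Perm.viaFintypeEmbedding_apply_notMem_range _ _ ?_)
    rintro ⟨i, hi⟩
    exact hk (congrArg Prod.fst ((blockEquiv ℓ).symm.injective hi)).symm

lemma centralPerm_zero_ne_zero {π : Equiv.Perm (Fin (2 * ℓ + 1))}
    (hπc : π (centralIndex ℓ) ≠ centralIndex ℓ) : centralPerm ℓ π 0 ≠ 0 := by
  have h0 : centralEmbedding ℓ (centralIndex ℓ) = 0 := by
    simp [centralEmbedding, centralIndex, blockEquiv_symm_apply]
  rw [← h0, centralPerm, Equiv.Perm.viaFintypeEmbedding_apply_image]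
  exact (centralEmbedding ℓ).injective.ne hπc

lemma iterate_blockLift_injective {p : ℤ → ℤ} (hp : p.Injective) (N : ℕ) :
    ((blockLift ℓ)^[N] p).Injective := by
  induction N with
  | zero => exact hp
  | succ N ih =>
    rw [Function.iterate_succ_apply']
    exact (blockEquiv ℓ).symm.injective.comp <|
      (ih.prodMap Function.injective_id).comp (blockEquiv ℓ).injective

lemma mapsTo_iterate_blockLift_compl {p : ℤ → ℤ} (hp : p 0 ≠ 0) (N : ℕ) :
    MapsTo ((blockLift ℓ)^[N] p) (centralBlock ℓ N) (centralBlock ℓ N)ᶜ := by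
  induction N with
  | zero => simpa [centralBlock] using hp
  | succ N ih =>
    intro m hm
    rw [Function.iterate_succ_apply']
    simpa [centralBlock, blockLift] using ih hm

lemma Icc_subset_centralBlock (hℓ : 0 < ℓ) (N : ℕ) : Icc (-N : ℤ) N ⊆ centralBlock ℓ N := by
  induction N with
  | zero => intro m hm; simp_all [centralBlock]
  | succ N ih =>
    rintro m ⟨hm₁, hm₂⟩
    have hB : (0 : ℤ) < ((2 * ℓ + 1 : ℕ) : ℤ) := by positivity
    have hℓN : (0 : ℤ) ≤ ℓ * N := by positivity
    push_cast at hm₁ hm₂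
    refine ih ⟨?_, ?_⟩ <;> simp only [blockEquiv_apply_fst]
    · rw [Int.le_ediv_iff_mul_le hB]; push_cast; nlinarith
    · rw [← Int.lt_add_one_iff, Int.ediv_lt_iff_lt_mul hB]; push_cast; nlinarith

theorem exists_injective_disjoint_iterate_renormalize_comp_eq
    {φ : (Fin (2 * ℓ + 1) → M) → M} {π : Equiv.Perm (Fin (2 * ℓ + 1))}
    (hπφ : ∀ a : Fin (2 * ℓ + 1) → M, φ (fun i => a (π i)) = φ a)
    (hπc : π (centralIndex ℓ) ≠ centralIndex ℓ) (F : Finset ℤ) :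
    ∃ σ : ℤ → ℤ, ∃ N : ℕ, σ.Injective ∧ Disjoint (F : Set ℤ) (σ '' F) ∧
      ∀ n, N < n → ∀ a : ℤ → M, (renormalize ℓ φ)^[n] (a ∘ σ) = (renormalize ℓ φ)^[n] a := by
  have hℓ : 0 < ℓ := Nat.pos_of_ne_zero <| by
    rintro rfl
    exact hπc (Subsingleton.elim (α := Fin 1) _ _)
  set N := F.sup Int.natAbs
  have hF : (F : Set ℤ) ⊆ centralBlock ℓ N := fun m hm =>
    have := Finset.le_sup (f := Int.natAbs) hm
    Icc_subset_centralBlock hℓ N ⟨by omega, by omega⟩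
  refine ⟨(blockLift ℓ)^[N] (centralPerm ℓ π), N,
    iterate_blockLift_injective (centralPerm ℓ π).injective N,
    disjoint_compl_right.mono hF <| (image_mono hF).trans
      (mapsTo_iterate_blockLift_compl (centralPerm_zero_ne_zero hπc) N).image_subset, ?_⟩
  intro n hn a
  obtain ⟨k, rfl⟩ := Nat.exists_eq_add_of_lt hn
  rw [show N + k + 1 = k + 1 + N by omega, Function.iterate_add_apply,
    Function.iterate_add_apply _ _ N a, iterate_renormalize_comp_iterate_blockLift,
    Function.iterate_succ_apply, Function.iterate_succ_apply, renormalize_comp_centralPerm hπφ]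

end Renormalization

open Renormalization in
/-- **Zero-one law for the trace of simple symmetric renormalization maps.**
Let `T : M^ℤ → M^ℤ` be the simple renormalization map with measurable local rule
`φ : M^{2ℓ+1} → M`, i.e. `T(a)_k = φ(a_{(2ℓ+1)k-ℓ}, …, a_{(2ℓ+1)k+ℓ})`.  Suppose `φ` has
a positional symmetry (a permutation `π` of its arguments leaving it invariant) that moves
its central argument.  If `X = (X_k)_{k ∈ ℤ}` is i.i.d. and `X^T = (T^n(X)_0)_{n ∈ ℕ}` is
its trace, then every tail event `E ⊆ M^ℕ` satisfies `P(X^T ∈ E) ∈ {0,1}`. -/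
theorem renormalization_trace_zero_one_law
    {Ω M : Type*} [MeasurableSpace Ω] [MeasurableSpace M]
    (Pr : Measure Ω) [IsProbabilityMeasure Pr]
    (ℓ : ℕ) (φ : (Fin (2 * ℓ + 1) → M) → M) (hφ : Measurable φ)
    (T : (ℤ → M) → (ℤ → M))
    (hT : ∀ (a : ℤ → M) (k : ℤ),
      T a k = φ (fun i => a (((2 * ℓ + 1 : ℕ) : ℤ) * k - (ℓ : ℤ) + ((i : ℕ) : ℤ))))
    (π : Equiv.Perm (Fin (2 * ℓ + 1)))
    (hπφ : ∀ a : Fin (2 * ℓ + 1) → M, φ (fun i => a (π i)) = φ a)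
    (hπc : π ⟨ℓ, by omega⟩ ≠ ⟨ℓ, by omega⟩)
    (X : ℤ → Ω → M) (hmeas : ∀ k, Measurable (X k))
    (hindep : iIndepFun X Pr)
    (hident : ∀ k k', Measure.map (X k) Pr = Measure.map (X k') Pr)
    (E : Set (ℕ → M))
    (hE : ∀ n : ℕ, MeasurableSet[MeasurableSpace.comap
      (fun (a : ℕ → M) (k : ℕ) => a (k + n)) MeasurableSpace.pi] E) :
    Pr {ω | (fun n => T^[n] (fun k => X k ω) 0) ∈ E} = 0 ∨
      Pr {ω | (fun n => T^[n] (fun k => X k ω) 0) ∈ E} = 1 := by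
  obtain rfl : T = renormalize ℓ φ :=
    funext₂ fun a k => by rw [hT, renormalize]; simp only [blockEquiv_symm_apply]
  have := Measure.isProbabilityMeasure_map (μ := Pr) (hmeas 0).aemeasurable
  have hlaw : Pr.map (fun ω k => X k ω) = Measure.infinitePi fun _ => Pr.map (X 0) := by
    rw [hindep.map_fun_eq_infinitePi_map hmeas]
    simp_rw [hident _ 0]
  set trace : (ℤ → M) → ℕ → M := fun a n => (renormalize ℓ φ)^[n] a 0
  have hA : MeasurableSet (trace ⁻¹' E) :=
    (measurable_pi_lambda _ fun n => (measurable_pi_apply 0).comp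
      ((measurable_renormalize hφ).iterate n)) (Measurable.comap_le (by fun_prop) _ (hE 0))
  have hPr : Pr {ω | trace (fun k => X k ω) ∈ E} =
      Measure.infinitePi (fun _ => Pr.map (X 0)) (trace ⁻¹' E) := by
    rw [← hlaw, Measure.map_apply (by fun_prop) hA]
    rfl
  rw [hPr]
  refine infinitePi_eq_zero_or_one_of_forall_exists_invariant _ hA fun F => ?_
  obtain ⟨σ, N, hσ, hdisj, hinv⟩ :=
    exists_injective_disjoint_iterate_renormalize_comp_eq hπφ hπc F
  exact ⟨σ, hσ, hdisj, ext fun a =>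
    mem_iff_of_forall_add_eq (hE (N + 1)) fun k => congrFun (hinv _ (by omega) a) 0⟩
end

section
/- Let f : [0,1] → [0,1] be the map f(p) = 3p²(1−p) + p³. Then p = 1 is an attracting fixed point of f with basin of attraction containing (1/2, 1]: for every p ∈ (1/2, 1], the iterates satisfy lim_{n→∞} f^n(p) = 1; moreover for every p ∈ [0, 1/2), lim_{n→∞} f^n(p) = 0. -/
open Filter

private noncomputable def maj : ℝ → ℝ := fun p : ℝ => 3 * p ^ 2 * (1 - p) + p ^ 3

private lemma maj_cont : Continuous maj := by
  unfold maj; continuity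

private lemma maj_step {p : ℝ} (hp : p ∈ Set.Ioc (1 / 2 : ℝ) 1) :
    maj p ∈ Set.Ioc (1 / 2 : ℝ) 1 ∧ p ≤ maj p := by
  obtain ⟨h1, h2⟩ := hp
  have hle : p ≤ maj p := by
    have key : 0 ≤ p * (2 * p - 1) * (1 - p) :=
      mul_nonneg (mul_nonneg (by linarith) (by linarith)) (by linarith)
    unfold maj; nlinarith [key]
  refine ⟨⟨lt_of_lt_of_le h1 hle, ?_⟩, hle⟩
  unfold maj; nlinarith [sq_nonneg (1 - p)]

private lemma maj_tendsto_one {p : ℝ} (hp : p ∈ Set.Ioc (1 / 2 : ℝ) 1) :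
    Tendsto (fun n : ℕ => maj^[n] p) atTop (nhds 1) := by
  have hmem : ∀ n, maj^[n] p ∈ Set.Ioc (1 / 2 : ℝ) 1 := by
    intro n
    induction n with
    | zero => simpa using hp
    | succ n ih => rw [Function.iterate_succ_apply']; exact (maj_step ih).1
  have hmono : Monotone (fun n : ℕ => maj^[n] p) := by
    apply monotone_nat_of_le_succ
    intro n
    rw [Function.iterate_succ_apply']
    exact (maj_step (hmem n)).2
  have hbdd : BddAbove (Set.range fun n : ℕ => maj^[n] p) := by
    refine ⟨1, ?_⟩
    rintro x ⟨n, rfl⟩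
    exact (hmem n).2
  have htend : Tendsto (fun n : ℕ => maj^[n] p) atTop (nhds (⨆ n, maj^[n] p)) :=
    tendsto_atTop_ciSup hmono hbdd
  set L := ⨆ n, maj^[n] p with hL
  have hL_le : L ≤ 1 := ciSup_le fun n => (hmem n).2
  have hL_gt : (1 / 2 : ℝ) < L := lt_of_lt_of_le (hmem 0).1 (le_ciSup hbdd 0)
  have hfix : maj L = L := by
    have h1 : Tendsto (fun n : ℕ => maj^[n + 1] p) atTop (nhds L) :=
      htend.comp (tendsto_add_atTop_nat 1)
    have h2 : Tendsto (fun n : ℕ => maj (maj^[n] p)) atTop (nhds (maj L)) :=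
      (maj_cont.continuousAt.tendsto).comp htend
    have : (fun n : ℕ => maj^[n + 1] p) = fun n : ℕ => maj (maj^[n] p) := by
      funext n; rw [Function.iterate_succ_apply']
    rw [this] at h1
    exact tendsto_nhds_unique h2 h1
  have hL1 : L = 1 := by
    have := hfix
    unfold maj at this
    by_contra h
    have h1L : L < 1 := lt_of_le_of_ne hL_le h
    have key : 0 < L * (2 * L - 1) * (1 - L) :=
      mul_pos (mul_pos (by linarith) (by linarith)) (by linarith)
    nlinarith [key]
  rwa [hL1] at htend

private lemma maj_symm (p : ℝ) : maj (1 - p) = 1 - maj p := by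
  unfold maj; ring

/-- For the majority renormalization map `f(p) = 3p²(1-p) + p³`, the point `p = 1` is an
attracting fixed point whose basin of attraction contains `(1/2, 1]`: `f(1) = 1`,
`f^n(p) → 1` for every `p ∈ (1/2, 1]`, and moreover `f^n(p) → 0` for every `p ∈ [0, 1/2)`. -/
theorem majority_renormalization_dynamics :
    (fun p : ℝ => 3 * p ^ 2 * (1 - p) + p ^ 3) 1 = 1 ∧
    (∀ p : ℝ, p ∈ Set.Ioc (1 / 2 : ℝ) 1 →
      Tendsto (fun n : ℕ => (fun p : ℝ => 3 * p ^ 2 * (1 - p) + p ^ 3)^[n] p)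
        atTop (nhds 1)) ∧
    (∀ p : ℝ, p ∈ Set.Ico (0 : ℝ) (1 / 2) →
      Tendsto (fun n : ℕ => (fun p : ℝ => 3 * p ^ 2 * (1 - p) + p ^ 3)^[n] p)
        atTop (nhds 0)) := by
  have hf : (fun p : ℝ => 3 * p ^ 2 * (1 - p) + p ^ 3) = maj := rfl
  refine ⟨by norm_num, ?_, ?_⟩
  · intro p hp
    rw [hf]
    exact maj_tendsto_one hp
  · intro p hp
    rw [hf]
    have hq : (1 - p) ∈ Set.Ioc (1 / 2 : ℝ) 1 := by
      constructor <;> [linarith [hp.2]; linarith [hp.1]]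
    have hiter : ∀ n : ℕ, maj^[n] p = 1 - maj^[n] (1 - p) := by
      intro n
      induction n with
      | zero => simp
      | succ n ih =>
        rw [Function.iterate_succ_apply', Function.iterate_succ_apply', ih]
        exact maj_symm _
    have h1 : Tendsto (fun n : ℕ => 1 - maj^[n] (1 - p)) atTop (nhds (1 - 1)) :=
      tendsto_const_nhds.sub (maj_tendsto_one hq)
    simp only [sub_self] at h1
    convert h1 using 2 with n
    exact hiter n
end

section
/- Let f : [0,1] → [0,1] be the map f(p) = 3p²(1−p) + p³. For every p ∈ (1/2, 1], the series ∑_{n=0}^{∞} |1 − f^n(p)| converges, i.e., ∑_{n=0}^{∞} (1 − f^n(p)) < ∞. -/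
/-- For the majority renormalization map `f(p) = 3p²(1-p) + p³` and every `p ∈ (1/2, 1]`,
the series `∑_n |1 - f^n(p)|` converges. -/
theorem majority_renormalization_summable
    (p : ℝ) (hp : p ∈ Set.Ioc (1 / 2 : ℝ) 1) :
    Summable (fun n : ℕ => |1 - (fun q : ℝ => 3 * q ^ 2 * (1 - q) + q ^ 3)^[n] p|) := by
  obtain ⟨hp1, hp2⟩ := hp
  set f : ℝ → ℝ := fun q : ℝ => 3 * q ^ 2 * (1 - q) + q ^ 3 with hf
  set c : ℝ := (1 - p) * (1 + 2 * p) with hc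
  have hc0 : 0 ≤ c := by nlinarith
  have hc1 : c < 1 := by nlinarith
  have main : ∀ n : ℕ, f^[n] p ∈ Set.Ioc (1 / 2 : ℝ) 1 ∧
      1 - f^[n] p ≤ (1 - p) * c ^ n := by
    intro n
    induction n with
    | zero =>
      refine ⟨⟨hp1, hp2⟩, ?_⟩
      simp
    | succ n ih =>
      obtain ⟨⟨hq1, hq2⟩, hqe⟩ := ih
      set q := f^[n] p with hq
      have hiter : f^[n + 1] p = f q := by
        rw [Function.iterate_succ_apply']
      have hcn : c ^ n ≤ 1 := pow_le_one₀ hc0 hc1.le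
      have he0 : (0:ℝ) ≤ 1 - q := by linarith
      have heE : 1 - q ≤ 1 - p := by nlinarith
      have hkey : 1 - f q = (1 - q) ^ 2 * (1 + 2 * q) := by simp [hf]; ring
      constructor
      · rw [hiter]
        constructor
        · nlinarith [sq_nonneg (1 - q), sq_nonneg (2 * q - 1)]
        · nlinarith [sq_nonneg (1 - q)]
      · have hmono : (1 - q) * (3 - 2 * (1 - q)) ≤ c := by nlinarith
        calc 1 - f^[n + 1] p = ((1 - q) * (3 - 2 * (1 - q))) * (1 - q) := by
              rw [hiter, hkey]; ring
          _ ≤ c * ((1 - p) * c ^ n) := mul_le_mul hmono hqe he0 hc0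
          _ = (1 - p) * c ^ (n + 1) := by ring
  have hsum : Summable (fun n : ℕ => (1 - p) * c ^ n) :=
    (summable_geometric_of_lt_one hc0 hc1).mul_left _
  have hle : ∀ n : ℕ, |1 - f^[n] p| ≤ (1 - p) * c ^ n := by
    intro n
    obtain ⟨⟨hq1, hq2⟩, hqe⟩ := main n
    rw [abs_of_nonneg (by linarith)]
    exact hqe
  exact Summable.of_nonneg_of_le (fun n => abs_nonneg _) hle hsum
end

section
/- (Majority renormalization, supercritical case) Let X = (X_k)_{k∈ℤ} be i.i.d. {0,1}-valued Bernoulli(p) random variables. Define sequences X⁰ := X and, for n ≥ 1, Xⁿ_k := maj(X^{n−1}_{3k−1}, X^{n−1}_{3k}, X^{n−1}_{3k+1}) for k ∈ ℤ, where maj is the majority function of three bits. Let E₁ be the event that the trace (X⁰_0, X¹_0, X²_0, …) eventually stabilizes at 1, i.e., E₁ = {∃m ∀n ≥ m : Xⁿ_0 = 1}. If p > 1/2, then P(E₁) = 1; if p < 1/2, then P(E₁) = 0 and the trace almost surely eventually stabilizes at 0; if p = 1/2, then almost surely the trace stabilizes at neither 0 nor 1. -/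
/-!
`Y n k` is a function of the sites of `X` in the block of `3 ^ n` sites centred at `3 ^ n * k`,
and blocks of the same level are disjoint. Hence the three inputs of every majority are
independent, and by induction `P (Y n k = v) = majMap^[n] x` where `x = P (X k = v)` and
`majMap x = 3x² - 2x³` is the probability that the majority of three independent bits, each equal
to `v` with probability `x`, equals `v`. For `x < 1/2` these iterates decay geometrically, and
Borel–Cantelli shows that the trace eventually avoids `!v`.

At `p = 1/2` every marginal is `1/2`. If the trace equals `v` at level `N`, it equals `v` at level
`N + 1` only if `Y N (-1) = v` or `Y N 1 = v`; this event has probability `3/4` and is independent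
of the trace up to level `N`, which lives on the disjoint block around `0`. So the trace stays at
`v` for `j` further levels with probability at most `(3/4)^j`.
-/

open MeasureTheory ProbabilityTheory ENNReal

def majB (a b c : Bool) : Bool := (a && b) || (a && c) || (b && c)

lemma majB_eq_middle_iff (a b c : Bool) : majB a b c = b ↔ a = b ∨ c = b := by
  cases a <;> cases b <;> cases c <;> decide

def majMap (x : ℝ) : ℝ := 3 * x ^ 2 - 2 * x ^ 3

lemma majMap_half : majMap (1 / 2) = 1 / 2 := by norm_num [majMap]

lemma iterate_majMap_le {x : ℝ} (hx₀ : 0 ≤ x) (hx : x ≤ 1 / 2) (n : ℕ) :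
    0 ≤ majMap^[n] x ∧ majMap^[n] x ≤ (3 * x - 2 * x ^ 2) ^ n * x := by
  set c := 3 * x - 2 * x ^ 2
  have hc₀ : 0 ≤ c := by nlinarith
  have hc₁ : c ≤ 1 := by nlinarith
  induction n with
  | zero => simpa using hx₀
  | succ n ih =>
    obtain ⟨hy₀, hy⟩ := ih
    set y := majMap^[n] x
    have hyx : y ≤ x := hy.trans (mul_le_of_le_one_left hx₀ (pow_le_one₀ hc₀ hc₁))
    have hratio : 3 * y - 2 * y ^ 2 ≤ c := by nlinarith
    have hfactor : majMap y = y * (3 * y - 2 * y ^ 2) := by rw [majMap]; ring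
    rw [Function.iterate_succ_apply', hfactor]
    refine ⟨mul_nonneg hy₀ (by nlinarith), ?_⟩
    calc y * (3 * y - 2 * y ^ 2) ≤ c ^ n * x * c :=
          mul_le_mul hy hratio (by nlinarith) (by positivity)
      _ = c ^ (n + 1) * x := by ring

lemma summable_iterate_majMap {x : ℝ} (hx₀ : 0 ≤ x) (hx : x < 1 / 2) :
    Summable fun n => majMap^[n] x :=
  have hc : 3 * x - 2 * x ^ 2 < 1 := by nlinarith
  (summable_geometric_of_lt_one (by nlinarith) hc |>.mul_right x).of_nonneg_of_le
    (fun n => (iterate_majMap_le hx₀ hx.le n).1) (fun n => (iterate_majMap_le hx₀ hx.le n).2)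

section SigmaOn

variable {Ω ι β : Type*} [MeasurableSpace β]

abbrev sigmaOn (Z : ι → Ω → β) (S : Set ι) : MeasurableSpace Ω :=
  ⨆ i ∈ S, MeasurableSpace.comap (Z i) inferInstance

variable {Z : ι → Ω → β} {S T : Set ι}

lemma sigmaOn_mono (h : S ⊆ T) : sigmaOn Z S ≤ sigmaOn Z T :=
  biSup_mono h

lemma measurable_sigmaOn {i : ι} (hi : i ∈ S) : Measurable[sigmaOn Z S] (Z i) :=
  Measurable.of_comap_le
    (le_iSup₂ (f := fun i (_ : i ∈ S) => MeasurableSpace.comap (Z i) _) i hi)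

variable [MeasurableSpace Ω]

lemma sigmaOn_le (hZ : ∀ i, Measurable (Z i)) : sigmaOn Z S ≤ ‹MeasurableSpace Ω› :=
  iSup₂_le fun i _ => (hZ i).comap_le

lemma measureReal_inter_eq_mul_of_disjoint {μ : Measure Ω}
    (hZ : ∀ i, Measurable (Z i)) (hind : iIndepFun Z μ) (hST : Disjoint S T) {s t : Set Ω}
    (hs : MeasurableSet[sigmaOn Z S] s) (ht : MeasurableSet[sigmaOn Z T] t) :
    μ.real (s ∩ t) = μ.real s * μ.real t := by
  have := (Indep_iff _ _ μ).1 (indep_iSup_of_disjoint (fun i => (hZ i).comap_le)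
    ((iIndepFun_iff_iIndep _ _ _).1 hind) hST) s t hs ht
  simp [measureReal_def, this]

end SigmaOn

section Bits

variable {Ω : Type*} [MeasurableSpace Ω] {μ : Measure Ω}

lemma measureReal_eq_true_of_map_eq_bernoulli {D : Ω → Bool} (hD : Measurable D)
    {q : NNReal} (hq : q ≤ 1) (h : μ.map D = (PMF.bernoulli q hq).toMeasure) :
    μ.real {ω | D ω = true} = q := by
  have hmap := Measure.map_apply hD (measurableSet_singleton true) (μ := μ)
  rw [h, PMF.toMeasure_apply_singleton _ _ (measurableSet_singleton true),
    PMF.bernoulli_apply] at hmap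
  rw [measureReal_def, show {ω | D ω = true} = D ⁻¹' {true} from rfl, ← hmap]
  rfl

variable [IsProbabilityMeasure μ]

lemma measure_setOf_eq_one_of_ae {q : Ω → Prop} (h : ∀ᵐ ω ∂μ, q ω) :
    μ {ω | q ω} = 1 :=
  (measure_congr (ae_eq_univ.2 (ae_iff.1 h))).trans measure_univ

lemma measureReal_setOf_eq_not {D : Ω → Bool} (hD : Measurable D)
    {v : Bool} {x : ℝ} (h : μ.real {ω | D ω = v} = x) : μ.real {ω | D ω = !v} = 1 - x := by
  have hc : {ω | D ω = !v} = {ω | D ω = v}ᶜ := by ext ω; cases v <;> simp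
  have hm : MeasurableSet {ω | D ω = v} := hD (measurableSet_singleton v)
  rw [hc, probReal_compl_eq_one_sub hm, h]

lemma measureReal_majB_eq {A B C : Ω → Bool}
    (hA : Measurable A) (hB : Measurable B) (hC : Measurable C)
    (hind : ∀ a b c, μ.real ({ω | A ω = a} ∩ {ω | B ω = b} ∩ {ω | C ω = c}) =
      μ.real {ω | A ω = a} * μ.real {ω | B ω = b} * μ.real {ω | C ω = c})
    {v : Bool} {x : ℝ} (hAx : μ.real {ω | A ω = v} = x) (hBx : μ.real {ω | B ω = v} = x)
    (hCx : μ.real {ω | C ω = v} = x) :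
    μ.real {ω | majB (A ω) (B ω) (C ω) = v} = majMap x := by
  set F : Ω → Bool × Bool × Bool := fun ω => (A ω, B ω, C ω)
  have hF : Measurable F := hA.prodMk (hB.prodMk hC)
  have hfiber : ∀ t, F ⁻¹' {t} =
      {ω | A ω = t.1} ∩ {ω | B ω = t.2.1} ∩ {ω | C ω = t.2.2} := by
    rintro ⟨a, b, c⟩; ext ω; simp [F, and_assoc]
  have hmaj : {ω | majB (A ω) (B ω) (C ω) = v} = F ⁻¹' ↑(Finset.univ.filter
      fun t : Bool × Bool × Bool => majB t.1 t.2.1 t.2.2 = v) := by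
    ext ω; simp [F]
  rw [hmaj, ← sum_measureReal_preimage_singleton _ fun t _ => hF (measurableSet_singleton t)]
  simp only [hfiber, hind, Finset.sum_filter, Fintype.sum_prod_type, Fintype.sum_bool]
  have hA' := measureReal_setOf_eq_not hA hAx
  have hB' := measureReal_setOf_eq_not hB hBx
  have hC' := measureReal_setOf_eq_not hC hCx
  cases v <;> simp_all [majB, majMap] <;> ring

end Bits

namespace MajorityRenormalization

def block (n : ℕ) (k : ℤ) : Set ℤ := {i | 2 * |i - 3 ^ n * k| < 3 ^ n}

lemma mem_block_zero (k : ℤ) : k ∈ block 0 k := by simp [block]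

lemma block_subset_block_succ {n : ℕ} {j k : ℤ} (h : |j - 3 * k| ≤ 1) :
    block n j ⊆ block (n + 1) k := by
  intro i (hi : 2 * |i - 3 ^ n * j| < 3 ^ n)
  have hshift : |3 ^ n * j - 3 ^ (n + 1) * k| ≤ 3 ^ n := by
    rw [pow_succ, mul_assoc, ← mul_sub, abs_mul, abs_of_pos (by positivity)]
    exact mul_le_of_le_one_right (by positivity) h
  have := abs_sub_le i (3 ^ n * j) (3 ^ (n + 1) * k)
  change 2 * |i - 3 ^ (n + 1) * k| < 3 ^ (n + 1)
  linarith [pow_succ (3 : ℤ) n]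

lemma block_zero_subset {n N : ℕ} (h : n ≤ N) : block n 0 ⊆ block N 0 :=
  fun i (hi : 2 * |i - 3 ^ n * 0| < 3 ^ n) =>
    show 2 * |i - 3 ^ N * 0| < 3 ^ N by
      simpa using hi.trans_le (pow_le_pow_right₀ (by norm_num) h)

lemma disjoint_block {n : ℕ} {k l : ℤ} (h : k ≠ l) : Disjoint (block n k) (block n l) := by
  refine Set.disjoint_left.2 fun i (hk : 2 * |i - 3 ^ n * k| < 3 ^ n)
    (hl : 2 * |i - 3 ^ n * l| < 3 ^ n) => h ?_
  have hdist := abs_sub_le (3 ^ n * k) i (3 ^ n * l)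
  rw [abs_sub_comm (3 ^ n * k) i, ← mul_sub, abs_mul, abs_of_pos (by positivity)] at hdist
  have : |k - l| < 1 := by
    by_contra! h1
    nlinarith [show (0 : ℤ) < 3 ^ n by positivity]
  have := abs_lt.1 this
  omega

variable {Ω : Type*}

def IsRenormalization (Y : ℕ → ℤ → Ω → Bool) : Prop :=
  ∀ n k ω, Y (n + 1) k ω = majB (Y n (3 * k - 1) ω) (Y n (3 * k) ω) (Y n (3 * k + 1) ω)

namespace IsRenormalization

variable {Y : ℕ → ℤ → Ω → Bool}

lemma measurable_block (hY : IsRenormalization Y) (n : ℕ) (k : ℤ) :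
    Measurable[sigmaOn (Y 0) (block n k)] (Y n k) := by
  induction n generalizing k with
  | zero => exact measurable_sigmaOn (mem_block_zero k)
  | succ n ih =>
    have hsub : ∀ j, |j - 3 * k| ≤ 1 → Measurable[sigmaOn (Y 0) (block (n + 1) k)] (Y n j) :=
      fun j hj => (ih j).mono (sigmaOn_mono (block_subset_block_succ hj)) le_rfl
    have hcomp : Y (n + 1) k = (fun t : Bool × Bool × Bool => majB t.1 t.2.1 t.2.2) ∘
        fun ω => (Y n (3 * k - 1) ω, Y n (3 * k) ω, Y n (3 * k + 1) ω) := funext (hY n k)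
    rw [hcomp]
    exact (measurable_of_countable _).comp
      ((hsub _ (by norm_num)).prodMk ((hsub _ (by norm_num)).prodMk (hsub _ (by norm_num))))

lemma measurableSet_block (hY : IsRenormalization Y) (n : ℕ) (k : ℤ) (v : Bool) :
    MeasurableSet[sigmaOn (Y 0) (block n k)] {ω | Y n k ω = v} :=
  hY.measurable_block n k (measurableSet_singleton v)

lemma measurableSet_trace (hY : IsRenormalization Y) (m N : ℕ) (v : Bool) :
    MeasurableSet[sigmaOn (Y 0) (block N 0)]
      {ω | ∀ n, m ≤ n → n ≤ N → Y n 0 ω = v} := by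
  have htrace : {ω | ∀ n, m ≤ n → n ≤ N → Y n 0 ω = v} =
      ⋂ n, ⋂ (_ : m ≤ n), ⋂ (_ : n ≤ N), {ω | Y n 0 ω = v} := by
    ext ω; simp
  rw [htrace]
  exact MeasurableSet.iInter fun n => MeasurableSet.iInter fun _ => MeasurableSet.iInter
    fun hn => sigmaOn_mono (block_zero_subset hn) _ (hY.measurableSet_block n 0 v)

variable [MeasurableSpace Ω] {Pr : Measure Ω} [IsProbabilityMeasure Pr]

lemma measurable (hY : IsRenormalization Y) (h0 : ∀ k, Measurable (Y 0 k)) (n : ℕ) (k : ℤ) :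
    Measurable (Y n k) :=
  (hY.measurable_block n k).mono (sigmaOn_le h0) le_rfl

lemma measureReal_eq_iterate_majMap (hY : IsRenormalization Y) (h0 : ∀ k, Measurable (Y 0 k))
    (hind : iIndepFun (Y 0) Pr) {v : Bool} {x : ℝ} (hx : ∀ k, Pr.real {ω | Y 0 k ω = v} = x)
    (n : ℕ) (k : ℤ) : Pr.real {ω | Y n k ω = v} = majMap^[n] x := by
  induction n generalizing k with
  | zero => exact hx k
  | succ n ih =>
    have hind3 : ∀ a b c, Pr.real ({ω | Y n (3 * k - 1) ω = a} ∩ {ω | Y n (3 * k) ω = b} ∩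
        {ω | Y n (3 * k + 1) ω = c}) = Pr.real {ω | Y n (3 * k - 1) ω = a} *
          Pr.real {ω | Y n (3 * k) ω = b} * Pr.real {ω | Y n (3 * k + 1) ω = c} := by
      intro a b c
      have hbc : MeasurableSet[sigmaOn (Y 0) (block n (3 * k) ∪ block n (3 * k + 1))]
          ({ω | Y n (3 * k) ω = b} ∩ {ω | Y n (3 * k + 1) ω = c}) :=
        MeasurableSet.inter (sigmaOn_mono Set.subset_union_left _ (hY.measurableSet_block n _ b))
          (sigmaOn_mono Set.subset_union_right _ (hY.measurableSet_block n _ c))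
      rw [Set.inter_assoc, measureReal_inter_eq_mul_of_disjoint h0 hind
          (Set.disjoint_union_right.2 ⟨disjoint_block (by omega), disjoint_block (by omega)⟩)
          (hY.measurableSet_block n (3 * k - 1) a) hbc,
        measureReal_inter_eq_mul_of_disjoint h0 hind (disjoint_block (by omega))
          (hY.measurableSet_block n (3 * k) b) (hY.measurableSet_block n (3 * k + 1) c), mul_assoc]
    simp only [hY n k, Function.iterate_succ_apply']
    have hmeas := hY.measurable h0 n
    exact measureReal_majB_eq (hmeas _) (hmeas _) (hmeas _) hind3 (ih _) (ih _) (ih _)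

lemma measureReal_eq_half (hY : IsRenormalization Y) (h0 : ∀ k, Measurable (Y 0 k))
    (hind : iIndepFun (Y 0) Pr) (h : ∀ k, Pr.real {ω | Y 0 k ω = true} = 1 / 2)
    (v : Bool) (n : ℕ) (k : ℤ) : Pr.real {ω | Y n k ω = v} = 1 / 2 := by
  have hv : ∀ k, Pr.real {ω | Y 0 k ω = v} = 1 / 2 := by
    cases v
    · exact fun k => (measureReal_setOf_eq_not (h0 k) (h k)).trans (by norm_num)
    · exact h
  rw [hY.measureReal_eq_iterate_majMap h0 hind hv, Function.iterate_fixed majMap_half]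

lemma ae_exists_forall_ge_eq (hY : IsRenormalization Y) (h0 : ∀ k, Measurable (Y 0 k))
    (hind : iIndepFun (Y 0) Pr) {v : Bool} {x : ℝ} (hx₀ : 0 ≤ x) (hx₁ : x < 1 / 2)
    (hx : ∀ k, Pr.real {ω | Y 0 k ω = !v} = x) (k : ℤ) :
    ∀ᵐ ω ∂Pr, ∃ m, ∀ n ≥ m, Y n k ω = v := by
  have hlaw n : Pr {ω | Y n k ω = !v} = ENNReal.ofReal (majMap^[n] x) := by
    rw [← hY.measureReal_eq_iterate_majMap h0 hind hx n k, ofReal_measureReal]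
  have hsum : ∑' n, Pr {ω | Y n k ω = !v} ≠ ∞ := by
    simp_rw [hlaw]
    rw [← ENNReal.ofReal_tsum_of_nonneg (fun n => (iterate_majMap_le hx₀ hx₁.le n).1)
      (summable_iterate_majMap hx₀ hx₁)]
    exact ofReal_ne_top
  filter_upwards [ae_eventually_notMem hsum] with ω hω
  simpa using hω

lemma measureReal_neighbours_eq (hY : IsRenormalization Y) (h0 : ∀ k, Measurable (Y 0 k))
    (hind : iIndepFun (Y 0) Pr) (hhalf : ∀ v n k, Pr.real {ω | Y n k ω = v} = 1 / 2)
    (N : ℕ) (v : Bool) : Pr.real ({ω | Y N (-1) ω = v} ∪ {ω | Y N 1 ω = v}) = 3 / 4 := by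
  have hcompl : ({ω | Y N (-1) ω = v} ∪ {ω | Y N 1 ω = v})ᶜ =
      {ω | Y N (-1) ω = !v} ∩ {ω | Y N 1 ω = !v} := by
    ext ω; cases v <;> simp
  have hm : MeasurableSet ({ω | Y N (-1) ω = v} ∪ {ω | Y N 1 ω = v}) :=
    (hY.measurable h0 N (-1) (measurableSet_singleton v)).union
      (hY.measurable h0 N 1 (measurableSet_singleton v))
  have := probReal_compl_eq_one_sub (μ := Pr) hm
  rw [hcompl, measureReal_inter_eq_mul_of_disjoint h0 hind (disjoint_block (by norm_num))
    (hY.measurableSet_block N (-1) _) (hY.measurableSet_block N 1 _), hhalf, hhalf] at this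
  linarith

lemma measureReal_trace_le (hY : IsRenormalization Y) (h0 : ∀ k, Measurable (Y 0 k))
    (hind : iIndepFun (Y 0) Pr) (hhalf : ∀ v n k, Pr.real {ω | Y n k ω = v} = 1 / 2)
    (v : Bool) (m j : ℕ) :
    Pr.real {ω | ∀ n, m ≤ n → n ≤ m + j → Y n 0 ω = v} ≤ (3 / 4) ^ j := by
  induction j with
  | zero => simp
  | succ j ih =>
    set N := m + j
    set R := {ω | Y N (-1) ω = v} ∪ {ω | Y N 1 ω = v}
    have hstep : {ω | ∀ n, m ≤ n → n ≤ N + 1 → Y n 0 ω = v} ⊆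
        {ω | ∀ n, m ≤ n → n ≤ N → Y n 0 ω = v} ∩ R := fun ω hω => by
      refine ⟨fun n hmn hn => hω n hmn (by omega), ?_⟩
      have hN := hω (N + 1) (by omega) le_rfl
      rwa [hY, show 3 * (0 : ℤ) = 0 from rfl, hω N (by omega) (by omega),
        majB_eq_middle_iff] at hN
    have hR : MeasurableSet[sigmaOn (Y 0) (block N (-1) ∪ block N 1)] R :=
      MeasurableSet.union (sigmaOn_mono Set.subset_union_left _ (hY.measurableSet_block N _ v))
        (sigmaOn_mono Set.subset_union_right _ (hY.measurableSet_block N _ v))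
    calc _ ≤ Pr.real ({ω | ∀ n, m ≤ n → n ≤ N → Y n 0 ω = v} ∩ R) :=
          measureReal_mono hstep
      _ = Pr.real {ω | ∀ n, m ≤ n → n ≤ N → Y n 0 ω = v} * (3 / 4) := by
        rw [measureReal_inter_eq_mul_of_disjoint h0 hind (Set.disjoint_union_right.2
          ⟨disjoint_block (by norm_num), disjoint_block (by norm_num)⟩)
          (hY.measurableSet_trace m N v) hR, hY.measureReal_neighbours_eq h0 hind hhalf]
      _ ≤ (3 / 4) ^ (j + 1) := by rw [pow_succ]; gcongr

lemma measure_forall_ge_eq_zero (hY : IsRenormalization Y) (h0 : ∀ k, Measurable (Y 0 k))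
    (hind : iIndepFun (Y 0) Pr) (hhalf : ∀ v n k, Pr.real {ω | Y n k ω = v} = 1 / 2)
    (v : Bool) (m : ℕ) : Pr {ω | ∀ n ≥ m, Y n 0 ω = v} = 0 := by
  refine (measureReal_eq_zero_iff).1 (le_antisymm ?_ measureReal_nonneg)
  refine ge_of_tendsto' (tendsto_pow_atTop_nhds_zero_of_lt_one (by norm_num) (by norm_num))
    fun j => (measureReal_mono ?_).trans (hY.measureReal_trace_le h0 hind hhalf v m j)
  exact fun ω hω n hn _ => hω n hn

end IsRenormalization

end MajorityRenormalization

/-- **Majority renormalization of an i.i.d. Bernoulli sequence.**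
Let `X = (X_k)_{k ∈ ℤ}` be i.i.d. Bernoulli(`p`) and let `Y n` denote the `n`-th iterate of
the block-majority renormalization, `Y (n+1) k = maj(Y n (3k-1), Y n (3k), Y n (3k+1))`.
If `p > 1/2` the trace `(Y n 0)_n` a.s. eventually stabilizes at `1`; if `p < 1/2` it a.s.
eventually stabilizes at `0` (and stabilizes at `1` with probability `0`); and if `p = 1/2`
it a.s. stabilizes at neither value. -/
theorem majority_renormalization_trace
    {Ω : Type*} [MeasurableSpace Ω] (Pr : Measure Ω) [IsProbabilityMeasure Pr]
    (p : ℝ≥0∞) (hp : p ≤ 1)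
    (X : ℤ → Ω → Bool) (hmeas : ∀ k, Measurable (X k))
    (hindep : iIndepFun X Pr)
    (hdist : ∀ k, Measure.map (X k) Pr = (PMF.bernoulli p.toNNReal
      (by simpa using ENNReal.toNNReal_mono ENNReal.one_ne_top hp)).toMeasure)
    (Y : ℕ → ℤ → Ω → Bool)
    (hY0 : ∀ k ω, Y 0 k ω = X k ω)
    (hYs : ∀ n k ω, Y (n + 1) k ω
      = majB (Y n (3 * k - 1) ω) (Y n (3 * k) ω) (Y n (3 * k + 1) ω)) :
    (1 / 2 < p → Pr {ω | ∃ m, ∀ n ≥ m, Y n 0 ω = true} = 1) ∧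
    (p < 1 / 2 → Pr {ω | ∃ m, ∀ n ≥ m, Y n 0 ω = true} = 0 ∧
      Pr {ω | ∃ m, ∀ n ≥ m, Y n 0 ω = false} = 1) ∧
    (p = 1 / 2 → Pr {ω | (∃ m, ∀ n ≥ m, Y n 0 ω = true) ∨
      (∃ m, ∀ n ≥ m, Y n 0 ω = false)} = 0) := by
  obtain rfl : X = Y 0 := funext₂ fun k ω => (hY0 k ω).symm
  have hY : MajorityRenormalization.IsRenormalization Y := hYs
  have hp_ne_top : p ≠ ∞ := ne_top_of_le_ne_top one_ne_top hp
  have hp_le : p.toReal ≤ 1 := by simpa using toReal_mono one_ne_top hp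
  have htrue k : Pr.real {ω | Y 0 k ω = true} = p.toReal :=
    (measureReal_eq_true_of_map_eq_bernoulli (hmeas k) _ (hdist k)).trans
      (coe_toNNReal_eq_toReal p)
  refine ⟨fun hp2 => ?_, fun hp2 => ?_, fun hp2 => ?_⟩
  · have : 1 / 2 < p.toReal := by simpa using (toReal_lt_toReal (by simp) hp_ne_top).2 hp2
    exact measure_setOf_eq_one_of_ae (hY.ae_exists_forall_ge_eq hmeas hindep
      (by linarith) (by linarith) (fun k => measureReal_setOf_eq_not (hmeas k) (htrue k)) 0)
  · have : p.toReal < 1 / 2 := by simpa using (toReal_lt_toReal hp_ne_top (by simp)).2 hp2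
    have hae := hY.ae_exists_forall_ge_eq hmeas hindep (v := false) toReal_nonneg this htrue 0
    refine ⟨measure_mono_null ?_ (ae_iff.1 hae), measure_setOf_eq_one_of_ae hae⟩
    rintro ω ⟨m₁, h₁⟩ ⟨m₂, h₂⟩
    simpa [h₂ _ (le_max_right m₁ m₂)] using h₁ _ (le_max_left m₁ m₂)
  · have hp_half : p.toReal = 1 / 2 := by simp [hp2]
    have hhalf := hY.measureReal_eq_half hmeas hindep fun k => (htrue k).trans hp_half
    rw [Set.setOf_or, Set.setOf_exists, Set.setOf_exists]
    exact measure_union_null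
      (measure_iUnion_null (hY.measure_forall_ge_eq_zero hmeas hindep hhalf _))
      (measure_iUnion_null (hY.measure_forall_ge_eq_zero hmeas hindep hhalf _))
end

section
/- (Ergodicity with respect to dispersive semigroups) Let Γ be a countable set, M a measurable space, and p a probability measure on M; let μ := p^{⊗Γ} be the homogeneous product measure on M^Γ. Let Π be a dispersive semigroup of injective maps Γ → Γ, i.e., for every finite J ⊆ Γ there exists π ∈ Π with π(J) ∩ J = ∅. Then μ is ergodic with respect to the induced action: every measurable set E ⊆ M^Γ satisfying, for every π ∈ Π, that a ∈ E if and only if a^π := (a_{π(k)})_{k∈Γ} ∈ E, has μ(E) ∈ {0, 1}. -/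
/-!
Approximate `E` in measure by a cylinder `A` depending only on the coordinates in a finite set
`J`, and pick `π ∈ Π` moving `J` off itself. The shift `a ↦ a^π` preserves the product measure,
fixes `E`, and makes `A` independent of its preimage (the coordinates `π(J)` and `J` are
disjoint), so `μ E = μ (E ∩ π⁻¹E) ≈ μ (A ∩ π⁻¹A) = (μ A)² ≈ (μ E)²`. Thus `E` is independent of
itself.
-/

open MeasureTheory ProbabilityTheory Set
open scoped symmDiff

section SelfIndependentApproximation

variable {Ω : Type*} [MeasurableSpace Ω] {μ : Measure Ω} [IsProbabilityMeasure μ]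

theorem abs_measureReal_sub_sq_le_of_preimage_eq {T : Ω → Ω} (hT : MeasurePreserving T μ μ)
    {E A : Set Ω} (hE : MeasurableSet E) (hA : MeasurableSet A) (hTE : T ⁻¹' E = E)
    (hAT : μ (A ∩ T ⁻¹' A) = μ A * μ A) :
    |μ.real E - μ.real E ^ 2| ≤ 4 * μ.real (E ∆ A) := by
  set δ := μ.real (E ∆ A)
  have hEA : |μ.real E - μ.real A| ≤ δ :=
    abs_measureReal_sub_le_measureReal_symmDiff hE.nullMeasurableSet hA.nullMeasurableSet
  have hT_symmDiff : μ.real ((T ⁻¹' E) ∆ (T ⁻¹' A)) = δ := by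
    rw [← preimage_symmDiff]
    exact hT.measureReal_preimage (hE.symmDiff hA).nullMeasurableSet
  have h_inter_symmDiff :
      (E ∩ T ⁻¹' E) ∆ (A ∩ T ⁻¹' A) ⊆ E ∆ A ∪ (T ⁻¹' E) ∆ (T ⁻¹' A) := by
    intro x
    simp only [mem_symmDiff, mem_inter_iff, mem_union]
    tauto
  have hAT_real : μ.real (A ∩ T ⁻¹' A) = μ.real A ^ 2 := by
    simp only [measureReal_def, hAT, ENNReal.toReal_mul, sq]
  have hEA_sq : |μ.real E - μ.real A ^ 2| ≤ 2 * δ :=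
    calc |μ.real E - μ.real A ^ 2|
        = |μ.real (E ∩ T ⁻¹' E) - μ.real (A ∩ T ⁻¹' A)| := by
          rw [hTE, inter_self, hAT_real]
      _ ≤ μ.real ((E ∩ T ⁻¹' E) ∆ (A ∩ T ⁻¹' A)) :=
          abs_measureReal_sub_le_measureReal_symmDiff
            (hE.inter (hT.measurable hE)).nullMeasurableSet
            (hA.inter (hT.measurable hA)).nullMeasurableSet
      _ ≤ μ.real (E ∆ A) + μ.real ((T ⁻¹' E) ∆ (T ⁻¹' A)) :=
          (measureReal_mono h_inter_symmDiff).trans (measureReal_union_le _ _)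
      _ = 2 * δ := by rw [hT_symmDiff]; ring
  have hsq_sub_sq : |μ.real A ^ 2 - μ.real E ^ 2| ≤ 2 * δ := by
    have hsum : |μ.real A + μ.real E| ≤ 2 := by
      rw [abs_of_nonneg (by positivity)]
      linarith [measureReal_le_one (μ := μ) (s := A), measureReal_le_one (μ := μ) (s := E)]
    rw [sq_sub_sq, abs_mul, abs_sub_comm]
    exact mul_le_mul hsum hEA (abs_nonneg _) zero_le_two
  calc |μ.real E - μ.real E ^ 2|
      ≤ |μ.real E - μ.real A ^ 2| + |μ.real A ^ 2 - μ.real E ^ 2| := abs_sub_le _ _ _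
    _ ≤ 4 * δ := by linarith

theorem measure_eq_zero_or_one_of_measureDense {𝒜 : Set (Set Ω)} (h𝒜 : μ.MeasureDense 𝒜)
    {E : Set Ω} (hE : MeasurableSet E)
    (hmix : ∀ A ∈ 𝒜, ∃ T : Ω → Ω,
      MeasurePreserving T μ μ ∧ T ⁻¹' E = E ∧ μ (A ∩ T ⁻¹' A) = μ A * μ A) :
    μ E = 0 ∨ μ E = 1 := by
  have h_sq : μ.real E = μ.real E ^ 2 := by
    refine sub_eq_zero.mp (abs_nonpos_iff.mp (le_of_forall_pos_le_add fun ε hε => ?_))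
    obtain ⟨A, hA𝒜, hEA⟩ := h𝒜.approx E hE (measure_ne_top μ E) (ε / 4) (by positivity)
    obtain ⟨T, hT, hTE, hAT⟩ := hmix A hA𝒜
    have hδ : μ.real (E ∆ A) ≤ ε / 4 :=
      ENNReal.toReal_le_of_le_ofReal (by positivity) hEA.le
    linarith [abs_measureReal_sub_sq_le_of_preimage_eq hT hE (h𝒜.measurable A hA𝒜) hTE hAT]
  refine measure_eq_zero_or_one_of_indepSet_self ((indepSet_iff_measure_inter_eq_mul hE hE μ).2 ?_)
  rw [inter_self, ← ENNReal.toReal_eq_toReal_iff' (by finiteness) (by finiteness),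
    ENNReal.toReal_mul, ← measureReal_def, ← sq]
  exact h_sq

end SelfIndependentApproximation

section InfinitePi

variable {M Γ : Type*} [MeasurableSpace M] (p : Measure M) [IsProbabilityMeasure p]

theorem measurePreserving_comp_infinitePi {π : Γ → Γ} (hπ : Function.Injective π) :
    MeasurePreserving (fun (a : Γ → M) k => a (π k))
      (Measure.infinitePi fun _ => p) (Measure.infinitePi fun _ => p) :=
  ⟨by fun_prop, Measure.map_infinitePi_infinitePi_of_inj hπ⟩

theorem infinitePi_cylinder_inter_preimage_comp_s18 {π : Γ → Γ} (hπ : Function.Injective π)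
    {J : Finset Γ} (hJ : ∀ j ∈ J, π j ∉ J) {S : Set (J → M)} (hS : MeasurableSet S) :
    Measure.infinitePi (fun _ => p) (cylinder J S ∩ (fun a k => a (π k)) ⁻¹' cylinder J S) =
      Measure.infinitePi (fun _ => p) (cylinder J S) *
        Measure.infinitePi (fun _ => p) (cylinder J S) := by
  classical
  set μ := Measure.infinitePi fun _ : Γ => p
  have hdisj : Disjoint J (J.image π) := Finset.disjoint_left.mpr fun {j} hj hjπ => by
    obtain ⟨i, hi, rfl⟩ := Finset.mem_image.mp hjπ
    exact hJ i hi hj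
  have hcoord :
      IndepFun (fun (a : Γ → M) (j : J) => a j) (fun (a : Γ → M) (k : J.image π) => a k) μ :=
    (iIndepFun_infinitePi (P := fun _ => p) (X := fun _ x => x) fun _ => measurable_id)
      |>.indepFun_finset J (J.image π) hdisj fun k => measurable_pi_apply k
  have hrelabel : Measurable fun (y : J.image π → M) (j : J) =>
      y ⟨π j, Finset.mem_image_of_mem π j.2⟩ := by fun_prop
  have hindep : IndepFun J.restrict (fun a (j : J) => a (π j)) μ :=
    hcoord.comp measurable_id hrelabel
  calc μ (cylinder J S ∩ (fun a k => a (π k)) ⁻¹' cylinder J S)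
      = μ (cylinder J S) * μ ((fun a k => a (π k)) ⁻¹' cylinder J S) :=
        hindep.measure_inter_preimage_eq_mul S S hS hS
    _ = μ (cylinder J S) * μ (cylinder J S) := by
        rw [(measurePreserving_comp_infinitePi p hπ).measure_preimage
          hS.cylinder.nullMeasurableSet]

end InfinitePi

theorem product_measure_ergodic_dispersive_general
    {M Γ : Type*} [MeasurableSpace M]
    (p : Measure M) [IsProbabilityMeasure p]
    (μ : Measure (Γ → M))
    (hμ : ∀ (J : Finset Γ) (B : Γ → Set M), (∀ k, MeasurableSet (B k)) →
      μ {a | ∀ k ∈ J, a k ∈ B k} = ∏ k ∈ J, p (B k))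
    (Sg : Set (Γ → Γ))
    (hinj : ∀ π ∈ Sg, Function.Injective π)
    (hdisp : ∀ J : Finset Γ, ∃ π ∈ Sg, ∀ j ∈ J, π j ∉ J)
    (E : Set (Γ → M)) (hE : MeasurableSet E)
    (hinv : ∀ π ∈ Sg, ∀ a : Γ → M, a ∈ E ↔ (fun k => a (π k)) ∈ E) :
    μ E = 0 ∨ μ E = 1 := by
  obtain rfl : μ = Measure.infinitePi fun _ => p := Measure.eq_infinitePi _ hμ
  refine measure_eq_zero_or_one_of_measureDense
    (.of_generateFrom_isSetAlgebra_finite _ isSetAlgebra_measurableCylinders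
      generateFrom_measurableCylinders.symm) hE ?_
  intro A hA
  obtain ⟨J, S, hS, rfl⟩ := (mem_measurableCylinders A).1 hA
  obtain ⟨π, hπ, hπJ⟩ := hdisp J
  exact ⟨_, measurePreserving_comp_infinitePi p (hinj π hπ), ext fun a => (hinv π hπ a).symm,
    infinitePi_cylinder_inter_preimage_comp_s18 p (hinj π hπ) hπJ hS⟩

/-- **Ergodicity of homogeneous product measures with respect to dispersive semigroups.**
Let `μ = p^{⊗Γ}` be the homogeneous product measure on `M^Γ` (characterized by its values
on cylinder sets) and let `Sg` be a dispersive semigroup of injective maps `Γ → Γ`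
(for every finite `J ⊆ Γ` some `π ∈ Sg` has `π(J) ∩ J = ∅`).  Then every measurable
`E ⊆ M^Γ` invariant under the induced action of every `π ∈ Sg` has `μ(E) ∈ {0,1}`. -/
theorem product_measure_ergodic_dispersive
    {M Γ : Type*} [MeasurableSpace M] [Countable Γ]
    (p : Measure M) [IsProbabilityMeasure p]
    (μ : Measure (Γ → M)) [IsProbabilityMeasure μ]
    (hμ : ∀ (J : Finset Γ) (B : Γ → Set M), (∀ k, MeasurableSet (B k)) →
      μ {a | ∀ k ∈ J, a k ∈ B k} = ∏ k ∈ J, p (B k))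
    (Sg : Set (Γ → Γ))
    (hinj : ∀ π ∈ Sg, Function.Injective π)
    (hcomp : ∀ π ∈ Sg, ∀ π' ∈ Sg, π ∘ π' ∈ Sg)
    (hdisp : ∀ J : Finset Γ, ∃ π ∈ Sg, ∀ j ∈ J, π j ∉ J)
    (E : Set (Γ → M)) (hE : MeasurableSet E)
    (hinv : ∀ π ∈ Sg, ∀ a : Γ → M, a ∈ E ↔ (fun k => a (π k)) ∈ E) :
    μ E = 0 ∨ μ E = 1 :=
  product_measure_ergodic_dispersive_general p μ hμ Sg hinj hdisp E hE hinv
end
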